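/- arXiv:1910.00281 — 9 statements merged into one kernel-verified Lean document; each statement's English description precedes it below -/
import Mathlib

section
/- Let F be a gauge on ℝ², F_a its associated gauge, and F_{a,a} = (F_a)_a the associated gauge of F_a. Then F_{a,a}(x) = F(-x) for every x ∈ ℝ². -/
/-!
If `F_a z = 1` then `[y, z] ≤ F y` for all `y`, so `[z, x] = [-x, z] ≤ F (-x)`. Conversely, a
linear functional that supports the unit ball of `F` at `-x / F (-x)`, which exists by Hahn–Banach,
has the form `[·, z]` with `F_a z = 1` and `[z, x] = F (-x)`.
-/

noncomputable section

/-- The determinant form `[x,y] = x₁y₂ − x₂y₁`. -/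
def det2 (x y : ℝ × ℝ) : ℝ := x.1 * y.2 - x.2 * y.1

/-- A gauge (convex distance function) on ℝ². -/
def IsGauge (F : ℝ × ℝ → ℝ) : Prop :=
  (∀ x, 0 ≤ F x) ∧ (∀ x, F x = 0 ↔ x = 0) ∧
  (∀ (l : ℝ) (x : ℝ × ℝ), 0 < l → F (l • x) = l * F x) ∧
  (∀ x y, F (x + y) ≤ F x + F y)

/-- The associated gauge `F_a(x) = sup {[y,x] : F(y) = 1}`. -/
def assocGauge (F : ℝ × ℝ → ℝ) (x : ℝ × ℝ) : ℝ :=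
  sSup {d : ℝ | ∃ y, F y = 1 ∧ d = det2 y x}

section Sublinear

variable {E : Type*} [AddCommGroup E] [Module ℝ E] {N : E → ℝ}

lemma map_zero_of_pos_homogeneous (N_hom : ∀ c : ℝ, 0 < c → ∀ x, N (c • x) = c * N x) :
    N 0 = 0 := by
  have h := N_hom 2 two_pos 0
  rw [smul_zero] at h
  linarith

lemma mul_le_of_sublinear (N_hom : ∀ c : ℝ, 0 < c → ∀ x, N (c • x) = c * N x)
    (N_add : ∀ x y, N (x + y) ≤ N x + N y) (t : ℝ) (v : E) : t * N v ≤ N (t • v) := by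
  rcases lt_trichotomy t 0 with ht | rfl | ht
  · have h := N_add (t • v) ((-t) • v)
    rw [← add_smul, add_neg_cancel, zero_smul, map_zero_of_pos_homogeneous N_hom,
      N_hom _ (neg_pos.mpr ht)] at h
    linarith
  · simp [map_zero_of_pos_homogeneous N_hom]
  · exact (N_hom t ht v).ge

theorem exists_linearMap_le_sublinear_and_eq (N_hom : ∀ c : ℝ, 0 < c → ∀ x, N (c • x) = c * N x)
    (N_add : ∀ x y, N (x + y) ≤ N x + N y) (v : E) :
    ∃ g : E →ₗ[ℝ] ℝ, (∀ x, g x ≤ N x) ∧ g v = N v := by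
  have hN0 := map_zero_of_pos_homogeneous N_hom
  let f := LinearPMap.mkSpanSingleton' (σ := RingHom.id ℝ) v (N v) fun c hc => by
    rcases smul_eq_zero.mp hc with rfl | rfl
    · exact zero_smul ℝ _
    · rw [hN0, smul_zero]
  have hf : ∀ x : f.domain, f x ≤ N x := by
    rintro ⟨x, hx⟩
    obtain ⟨t, rfl⟩ := Submodule.mem_span_singleton.mp hx
    rw [LinearPMap.mkSpanSingleton'_apply]
    exact mul_le_of_sublinear N_hom N_add t v
  obtain ⟨g, hgf, hgN⟩ := exists_extension_of_le_sublinear f N N_hom N_add hf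
  refine ⟨g, hgN, ?_⟩
  have hv : v ∈ f.domain := Submodule.mem_span_singleton_self v
  rw [hgf ⟨v, hv⟩]
  exact LinearPMap.mkSpanSingleton'_apply_self _ _ _ _

end Sublinear

lemma det2_neg_left (x z : ℝ × ℝ) : det2 (-x) z = det2 z x := by
  simp only [det2, Prod.fst_neg, Prod.snd_neg]
  ring

lemma det2_smul_left (c : ℝ) (y z : ℝ × ℝ) : det2 (c • y) z = c * det2 y z := by
  simp only [det2, Prod.smul_fst, Prod.smul_snd, smul_eq_mul]
  ring

lemma exists_det2_eq_linearMap (g : ℝ × ℝ →ₗ[ℝ] ℝ) : ∃ z, ∀ y, det2 y z = g y := by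
  refine ⟨(-g (0, 1), g (1, 0)), fun ⟨a, b⟩ => ?_⟩
  have hab : ((a, b) : ℝ × ℝ) = a • (1, 0) + b • (0, 1) := by simp
  rw [congrArg g hab, map_add, map_smul, map_smul]
  simp only [det2, smul_eq_mul]
  ring

lemma assocGauge_eq_one_of_det2_le {F : ℝ × ℝ → ℝ} {z : ℝ × ℝ} (hle : ∀ y, det2 y z ≤ F y)
    {u : ℝ × ℝ} (hu : F u = 1) (huz : det2 u z = 1) : assocGauge F z = 1 := by
  refine IsGreatest.csSup_eq ⟨⟨u, hu, huz.symm⟩, ?_⟩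
  rintro d ⟨y, hy, rfl⟩
  exact hy ▸ hle y

namespace IsGauge

variable {F : ℝ × ℝ → ℝ}

lemma map_zero (hF : IsGauge F) : F 0 = 0 := (hF.2.1 0).mpr rfl

lemma pos (hF : IsGauge F) {x : ℝ × ℝ} (hx : x ≠ 0) : 0 < F x :=
  (hF.1 x).lt_of_ne fun h => hx ((hF.2.1 x).mp h.symm)

lemma map_inv_smul_self (hF : IsGauge F) {x : ℝ × ℝ} (hx : x ≠ 0) : F ((F x)⁻¹ • x) = 1 := by
  rw [hF.2.2.1 _ _ (inv_pos.mpr (hF.pos hx)), inv_mul_cancel₀ (hF.pos hx).ne']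

lemma det2_le_of_assocGauge_eq_one (hF : IsGauge F) {z : ℝ × ℝ} (hz : assocGauge F z = 1)
    (y : ℝ × ℝ) : det2 y z ≤ F y := by
  -- `sSup` of a set unbounded above is `0`, so `F_a z = 1` forces boundedness.
  have hbdd : BddAbove {d : ℝ | ∃ y, F y = 1 ∧ d = det2 y z} := by
    by_contra h
    exact one_ne_zero (hz.symm.trans (Real.sSup_of_not_bddAbove h))
  rcases eq_or_ne y 0 with rfl | hy
  · simp [det2, hF.map_zero]
  · have hunit : det2 ((F y)⁻¹ • y) z ≤ 1 := hz ▸ le_csSup hbdd ⟨_, hF.map_inv_smul_self hy, rfl⟩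
    rwa [det2_smul_left, inv_mul_le_iff₀ (hF.pos hy), mul_one] at hunit

lemma exists_assocGauge_eq_one_det2_eq (hF : IsGauge F) {x : ℝ × ℝ} (hx : x ≠ 0) :
    ∃ z, assocGauge F z = 1 ∧ det2 z x = F (-x) := by
  obtain ⟨g, hgF, hgx⟩ :=
    exists_linearMap_le_sublinear_and_eq (fun c hc y => hF.2.2.1 c y hc) hF.2.2.2 (-x)
  obtain ⟨z, hz⟩ := exists_det2_eq_linearMap g
  have hnx : -x ≠ 0 := neg_ne_zero.mpr hx
  refine ⟨z, assocGauge_eq_one_of_det2_le (fun y => (hz y).trans_le (hgF y))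
    (hF.map_inv_smul_self hnx) ?_, ?_⟩
  · rw [hz, map_smul, hgx, smul_eq_mul, inv_mul_cancel₀ (hF.pos hnx).ne']
  · rw [← det2_neg_left, hz, hgx]

end IsGauge

theorem assocGauge_assocGauge (F : ℝ × ℝ → ℝ) (hF : IsGauge F) :
    ∀ x : ℝ × ℝ, assocGauge (assocGauge F) x = F (-x) := by
  intro x
  rcases eq_or_ne x 0 with rfl | hx
  · have hvals : ∀ d ∈ {d : ℝ | ∃ z, assocGauge F z = 1 ∧ d = det2 z 0}, d = 0 := by
      rintro d ⟨z, -, rfl⟩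
      simp [det2]
    rw [neg_zero, hF.map_zero, assocGauge]
    exact le_antisymm (Real.sSup_nonpos fun d hd => (hvals d hd).le)
      (Real.sSup_nonneg fun d hd => (hvals d hd).ge)
  · obtain ⟨z, hz, hzx⟩ := hF.exists_assocGauge_eq_one_det2_eq hx
    refine IsGreatest.csSup_eq ⟨⟨z, hz, hzx.symm⟩, ?_⟩
    rintro d ⟨w, hw, rfl⟩
    rw [← det2_neg_left]
    exact hF.det2_le_of_assocGauge_eq_one hw (-x)
end
end

section
/- Let F be the Randers norm on ℝ² given by F(x₁,x₂) = √(x₁² + x₂²) + b·x₁ with |b| < 1. Then F is a gauge, and its associated gauge is F_a(x₁,x₂) = (1/(1-b²))·√((1-b²)x₁² + x₂²) − (b/(1-b²))·x₂. -/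
noncomputable section

/-- The Randers norm `F(x₁,x₂) = √(x₁²+x₂²) + b·x₁`. -/
def randers (b : ℝ) (x : ℝ × ℝ) : ℝ := Real.sqrt (x.1 ^ 2 + x.2 ^ 2) + b * x.1

/-!
Identifying `ℝ²` with `ℂ`, `F(x) = ‖x‖ + b x₁` is the Euclidean norm plus a linear form of norm
`|b| < 1`, hence a gauge. Squaring `√(y₁² + y₂²) = 1 - b y₁` shows that the unit circle of `F` is
the ellipse `(c y₁ + b)² + c y₂² = 1` with `c = 1 - b²`. On it, `c [y,x] + b x₂` is the pairing of
`(c y₁ + b, √c y₂)` with `(x₂, -√c x₁)`, so Cauchy–Schwarz bounds it by `√(c x₁² + x₂²)`, with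
equality at the point of the ellipse in the direction of `(x₂, -√c x₁)`.
-/

open Complex

lemma randers_eq_norm_add (b : ℝ) (x : ℝ × ℝ) :
    randers b x = ‖equivRealProdLm.symm x‖ + b * x.1 := by
  simp [randers, norm_eq_sqrt_sq_add_sq]

lemma fst_le_norm_equivRealProdLm_symm (x : ℝ × ℝ) : |x.1| ≤ ‖equivRealProdLm.symm x‖ := by
  simpa using abs_re_le_norm (equivRealProdLm.symm x)

section Randers

variable {b : ℝ}

lemma one_sub_abs_mul_norm_le_randers (x : ℝ × ℝ) :
    (1 - |b|) * ‖equivRealProdLm.symm x‖ ≤ randers b x := by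
  have hx := fst_le_norm_equivRealProdLm_symm x
  have hbx : -(b * x.1) ≤ |b| * ‖equivRealProdLm.symm x‖ :=
    (neg_le_abs _).trans ((abs_mul b x.1).trans_le (by gcongr))
  rw [randers_eq_norm_add]
  linarith

lemma randers_smul {l : ℝ} (hl : 0 ≤ l) (x : ℝ × ℝ) :
    randers b (l • x) = l * randers b x := by
  simp only [randers_eq_norm_add, map_smul, norm_smul, Real.norm_of_nonneg hl, Prod.smul_fst,
    smul_eq_mul]
  ring

lemma randers_add_le (x y : ℝ × ℝ) : randers b (x + y) ≤ randers b x + randers b y := by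
  simp only [randers_eq_norm_add, map_add, Prod.fst_add]
  linarith [norm_add_le (equivRealProdLm.symm x) (equivRealProdLm.symm y)]

theorem randers_isGauge (hb : |b| < 1) : IsGauge (randers b) := by
  have hpos : 0 < 1 - |b| := sub_pos.mpr hb
  refine ⟨fun x => ?_, fun x => ⟨fun hx => ?_, ?_⟩, fun l x hl => randers_smul hl.le x,
    randers_add_le⟩
  · exact (mul_nonneg hpos.le (norm_nonneg _)).trans (one_sub_abs_mul_norm_le_randers x)
  · have h := one_sub_abs_mul_norm_le_randers (b := b) x
    rw [hx] at h
    have : ‖equivRealProdLm.symm x‖ = 0 :=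
      le_antisymm (nonpos_of_mul_nonpos_right h hpos) (norm_nonneg _)
    simpa using this
  · rintro rfl
    simp [randers]

theorem randers_eq_one_iff (hb : |b| < 1) (y : ℝ × ℝ) :
    randers b y = 1 ↔ ((1 - b ^ 2) * y.1 + b) ^ 2 + (1 - b ^ 2) * y.2 ^ 2 = 1 := by
  have hc : 0 < 1 - b ^ 2 := sub_pos.mpr ((sq_lt_one_iff_abs_lt_one b).mpr hb)
  have hs : √(y.1 ^ 2 + y.2 ^ 2) ^ 2 = y.1 ^ 2 + y.2 ^ 2 := Real.sq_sqrt (by positivity)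
  have hy1 : |y.1| ≤ √(y.1 ^ 2 + y.2 ^ 2) := Real.abs_le_sqrt (by nlinarith [sq_nonneg y.2])
  have hby : b * y.1 ≤ |b| * |y.1| := (le_abs_self _).trans (abs_mul b y.1).le
  constructor
  · intro hy
    have h : √(y.1 ^ 2 + y.2 ^ 2) = 1 - b * y.1 := by rw [randers] at hy; linarith
    rw [h] at hs
    linear_combination (1 - b ^ 2) * hs.symm
  · intro hy
    have hsq : y.1 ^ 2 + y.2 ^ 2 = (1 - b * y.1) ^ 2 :=
      mul_left_cancel₀ hc.ne' (by linear_combination hy)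
    -- `1 - b y₁ < 0` would give `b y₁ - 1 ≥ |y₁| ≥ b y₁`.
    have hpos : 0 ≤ 1 - b * y.1 := by
      by_contra hneg
      have : |y.1| ≤ b * y.1 - 1 := by
        rw [hsq, Real.sqrt_sq_eq_abs, abs_of_neg (not_le.mp hneg)] at hy1; linarith
      nlinarith [abs_nonneg y.1]
    rw [randers, hsq, Real.sqrt_sq hpos]
    ring

theorem det2_le_of_randers_eq_one (hb : |b| < 1) (x : ℝ × ℝ) {y : ℝ × ℝ}
    (hy : randers b y = 1) :
    det2 y x ≤ (√((1 - b ^ 2) * x.1 ^ 2 + x.2 ^ 2) - b * x.2) / (1 - b ^ 2) := by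
  have hc : 0 < 1 - b ^ 2 := sub_pos.mpr ((sq_lt_one_iff_abs_lt_one b).mpr hb)
  have hell := (randers_eq_one_iff hb y).mp hy
  have hCS : ((1 - b ^ 2) * det2 y x + b * x.2) ^ 2 ≤ (1 - b ^ 2) * x.1 ^ 2 + x.2 ^ 2 := by
    have hLagrange : (1 - b ^ 2) * x.1 ^ 2 + x.2 ^ 2 - ((1 - b ^ 2) * det2 y x + b * x.2) ^ 2
        = (1 - b ^ 2) * (((1 - b ^ 2) * y.1 + b) * x.1 + y.2 * x.2) ^ 2 := by
      rw [det2]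
      linear_combination (-((1 - b ^ 2) * x.1 ^ 2 + x.2 ^ 2)) * hell
    nlinarith [mul_nonneg hc.le (sq_nonneg (((1 - b ^ 2) * y.1 + b) * x.1 + y.2 * x.2))]
  rw [le_div_iff₀ hc]
  linarith [Real.le_sqrt_of_sq_le hCS]

theorem exists_randers_eq_one_det2_eq (hb : |b| < 1) (x : ℝ × ℝ) :
    ∃ y, randers b y = 1 ∧
      det2 y x = (√((1 - b ^ 2) * x.1 ^ 2 + x.2 ^ 2) - b * x.2) / (1 - b ^ 2) := by
  have hc : 0 < 1 - b ^ 2 := sub_pos.mpr ((sq_lt_one_iff_abs_lt_one b).mpr hb)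
  have hK0 := Real.sqrt_nonneg ((1 - b ^ 2) * x.1 ^ 2 + x.2 ^ 2)
  have hK2 : √((1 - b ^ 2) * x.1 ^ 2 + x.2 ^ 2) ^ 2 = (1 - b ^ 2) * x.1 ^ 2 + x.2 ^ 2 :=
    Real.sq_sqrt (by positivity)
  generalize √((1 - b ^ 2) * x.1 ^ 2 + x.2 ^ 2) = K at hK0 hK2 ⊢
  rcases hK0.eq_or_lt with hK0 | hK0
  · subst hK0
    have hx1 : x.1 ^ 2 = 0 := by nlinarith [mul_nonneg hc.le (sq_nonneg x.1), sq_nonneg x.2]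
    have hx2 : x.2 ^ 2 = 0 := by nlinarith [mul_nonneg hc.le (sq_nonneg x.1), sq_nonneg x.2]
    exact ⟨(0, 1), by simp [randers], by simp_all [det2]⟩
  · refine ⟨((x.2 / K - b) / (1 - b ^ 2), -x.1 / K), (randers_eq_one_iff hb _).mpr ?_, ?_⟩
    · field_simp
      linear_combination hK2.symm
    · rw [det2]
      field_simp
      linear_combination (-1 : ℝ) * hK2

theorem assocGauge_randers (hb : |b| < 1) (x : ℝ × ℝ) :
    assocGauge (randers b) x = (√((1 - b ^ 2) * x.1 ^ 2 + x.2 ^ 2) - b * x.2) / (1 - b ^ 2) := by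
  refine IsGreatest.csSup_eq ⟨?_, ?_⟩
  · obtain ⟨y, hy, hdet⟩ := exists_randers_eq_one_det2_eq hb x
    exact ⟨y, hy, hdet.symm⟩
  · rintro d ⟨y, hy, rfl⟩
    exact det2_le_of_randers_eq_one hb x hy

end Randers

theorem randers_assocGauge (b : ℝ) (hb : |b| < 1) :
    IsGauge (randers b) ∧
      ∀ x : ℝ × ℝ, assocGauge (randers b) x =
        (1 / (1 - b ^ 2)) * Real.sqrt ((1 - b ^ 2) * x.1 ^ 2 + x.2 ^ 2)
          - (b / (1 - b ^ 2)) * x.2 := by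
  refine ⟨randers_isGauge hb, fun x => ?_⟩
  rw [assocGauge_randers hb x]
  ring
end
end

section
/- Let F(x₁,x₂) = √(x₁² + x₂²) + b·x₁ with |b| < 1 be a Randers norm on ℝ². Then F_{a,a}(x₁,x₂) = √(x₁² + x₂²) − b·x₁ = F(−x₁,−x₂). -/
noncomputable section

/-- Explicit formula for the first associated gauge of the Randers norm. -/
def aG (b : ℝ) (x : ℝ × ℝ) : ℝ :=
  (Real.sqrt ((1 - b ^ 2) * x.1 ^ 2 + x.2 ^ 2) - b * x.2) / (1 - b ^ 2)

lemma assocGauge_eq {F : ℝ × ℝ → ℝ} {x : ℝ × ℝ} {M : ℝ}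
    (hub : ∀ y, F y = 1 → det2 y x ≤ M) (hw : ∃ y, F y = 1 ∧ det2 y x = M) :
    assocGauge F x = M := by
  obtain ⟨y, hy, hd⟩ := hw
  refine IsGreatest.csSup_eq ⟨⟨y, hy, hd.symm⟩, ?_⟩
  rintro d ⟨z, hz, rfl⟩
  exact hub z hz

lemma cs (u v p q : ℝ) (h : p ^ 2 + q ^ 2 = 1) :
    u * p + v * q ≤ Real.sqrt (u ^ 2 + v ^ 2) := by
  rcases le_or_gt (u * p + v * q) 0 with h0 | h0
  · exact h0.trans (Real.sqrt_nonneg _)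
  · rw [Real.le_sqrt h0.le]
    nlinarith [sq_nonneg (u * q - v * p)]
    positivity

lemma step1 {b : ℝ} (hb : |b| < 1) (x : ℝ × ℝ) :
    assocGauge (randers b) x = aG b x := by
  obtain ⟨hb1, hb2⟩ := abs_lt.mp hb
  have hc : (0:ℝ) < 1 - b ^ 2 := by nlinarith
  by_cases hx : x = 0
  · subst hx
    have h0 : aG b (0 : ℝ × ℝ) = 0 := by simp [aG]
    rw [h0]
    apply assocGauge_eq
    · intro y hy; simp [det2]
    · exact ⟨(0, 1), by simp [randers], by simp [det2]⟩
  · have h12 : x.1 ≠ 0 ∨ x.2 ≠ 0 := by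
      by_contra h
      push_neg at h
      exact hx (Prod.ext h.1 h.2)
    have hxx : 0 < (1 - b ^ 2) * x.1 ^ 2 + x.2 ^ 2 := by
      rcases h12 with h1 | h2
      · have : 0 < x.1 ^ 2 := by positivity
        nlinarith [sq_nonneg x.2]
      · have : 0 < x.2 ^ 2 := by positivity
        nlinarith [mul_nonneg hc.le (sq_nonneg x.1)]
    obtain ⟨D, hDs, hD, hD2⟩ :
        ∃ D, D = Real.sqrt ((1 - b ^ 2) * x.1 ^ 2 + x.2 ^ 2) ∧ 0 < D ∧
          D ^ 2 = (1 - b ^ 2) * x.1 ^ 2 + x.2 ^ 2 :=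
      ⟨_, rfl, Real.sqrt_pos.mpr hxx, Real.sq_sqrt hxx.le⟩
    have hDbx : b * x.2 ≤ D := by
      nlinarith [hD2, hD.le, mul_nonneg hc.le (sq_nonneg x.1),
        mul_nonneg hc.le (sq_nonneg x.2)]
    obtain ⟨M, hMc⟩ : ∃ M, M * (1 - b ^ 2) = D - b * x.2 :=
      ⟨(D - b * x.2) / (1 - b ^ 2), by field_simp⟩
    have hM0 : 0 ≤ M := by nlinarith [hMc, hDbx]
    have hDeq : D = M * (1 - b ^ 2) + b * x.2 := by linarith
    have hgoal : aG b x = M := by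
      rw [aG, ← hDs, div_eq_iff hc.ne']
      linarith
    rw [hgoal]
    have hQ : (M * (1 - b ^ 2) + b * x.2) ^ 2 = (1 - b ^ 2) * x.1 ^ 2 + x.2 ^ 2 := by
      rw [← hDeq]; exact hD2
    have key : (x.2 - b * M) ^ 2 + x.1 ^ 2 = M ^ 2 := by
      have h' : (1 - b ^ 2) * ((x.2 - b * M) ^ 2 + x.1 ^ 2) = (1 - b ^ 2) * M ^ 2 := by
        linear_combination -hQ
      exact mul_left_cancel₀ hc.ne' h'
    apply assocGauge_eq
    · intro y hy
      unfold randers at hy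
      have hs0 : 0 ≤ Real.sqrt (y.1 ^ 2 + y.2 ^ 2) := Real.sqrt_nonneg _
      have hs2 : Real.sqrt (y.1 ^ 2 + y.2 ^ 2) ^ 2 = y.1 ^ 2 + y.2 ^ 2 :=
        Real.sq_sqrt (by positivity)
      obtain ⟨s, hsd⟩ : ∃ s, s = Real.sqrt (y.1 ^ 2 + y.2 ^ 2) := ⟨_, rfl⟩
      rw [← hsd] at hy hs0 hs2
      have hsl : s = 1 - b * y.1 := by linarith
      have hsq : Real.sqrt (1 - b ^ 2) ^ 2 = 1 - b ^ 2 := Real.sq_sqrt hc.le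
      have h1 : (y.1 + b * s) ^ 2 + (1 - b ^ 2) * y.2 ^ 2 = 1 := by
        linear_combination (b ^ 2 - 1) * hs2 + (s + b * y.1 + 1) * hsl
      have hpq : (y.1 + b * s) ^ 2 + (Real.sqrt (1 - b ^ 2) * y.2) ^ 2 = 1 := by
        linear_combination h1 + y.2 ^ 2 * hsq
      have hcs := cs x.2 (-(Real.sqrt (1 - b ^ 2) * x.1)) (y.1 + b * s)
        (Real.sqrt (1 - b ^ 2) * y.2) hpq
      have huv : x.2 ^ 2 + (-(Real.sqrt (1 - b ^ 2) * x.1)) ^ 2 = D ^ 2 := by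
        linear_combination x.1 ^ 2 * hsq - hD2
      rw [huv, Real.sqrt_sq hD.le] at hcs
      have hcs' : x.2 * (y.1 + b * s) - (1 - b ^ 2) * (x.1 * y.2) ≤ D := by
        have e : x.2 * (y.1 + b * s) + -(Real.sqrt (1 - b ^ 2) * x.1) *
            (Real.sqrt (1 - b ^ 2) * y.2)
            = x.2 * (y.1 + b * s) - (1 - b ^ 2) * (x.1 * y.2) := by
          linear_combination (-(x.1 * y.2)) * hsq
        rw [e] at hcs
        exact hcs
      rw [hsl] at hcs'
      unfold det2
      rw [show M = (D - b * x.2) / (1 - b ^ 2) from by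
        rw [eq_div_iff hc.ne']; linarith, le_div_iff₀ hc]
      nlinarith [hcs']
    · refine ⟨((x.2 - b * M) / D, -x.1 / D), ?_, ?_⟩
      · unfold randers
        have h1 : ((x.2 - b * M) / D) ^ 2 + (-x.1 / D) ^ 2 = (M / D) ^ 2 := by
          field_simp
          linear_combination key
        rw [h1, Real.sqrt_sq (by positivity)]
        field_simp
        linear_combination -hDeq
      · unfold det2
        have hq : x.1 ^ 2 + x.2 ^ 2 = M ^ 2 * (1 - b ^ 2) + 2 * M * b * x.2 := by
          linear_combination key
        field_simp
        linear_combination hq - M * hDeq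

lemma step2 {b : ℝ} (hb : |b| < 1) (x : ℝ × ℝ) :
    assocGauge (aG b) x = Real.sqrt (x.1 ^ 2 + x.2 ^ 2) - b * x.1 := by
  obtain ⟨hb1, hb2⟩ := abs_lt.mp hb
  have hc : (0:ℝ) < 1 - b ^ 2 := by nlinarith
  by_cases hx : x = 0
  · subst hx
    have h0 : Real.sqrt ((0:ℝ×ℝ).1 ^ 2 + (0:ℝ×ℝ).2 ^ 2) - b * (0:ℝ×ℝ).1 = 0 := by simp
    rw [h0]
    apply assocGauge_eq
    · intro y hy; simp [det2]
    · refine ⟨(0, 1 + b), ?_, by simp [det2]⟩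
      unfold aG
      simp only
      rw [show (1 - b ^ 2) * (0:ℝ) ^ 2 + (1 + b) ^ 2 = (1 + b) ^ 2 by ring,
        Real.sqrt_sq (by linarith)]
      rw [div_eq_one_iff_eq hc.ne']
      ring
  · have h12 : x.1 ≠ 0 ∨ x.2 ≠ 0 := by
      by_contra h
      push_neg at h
      exact hx (Prod.ext h.1 h.2)
    have hxx : 0 < x.1 ^ 2 + x.2 ^ 2 := by
      rcases h12 with h1 | h2
      · have : 0 < x.1 ^ 2 := by positivity
        nlinarith [sq_nonneg x.2]
      · have : 0 < x.2 ^ 2 := by positivity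
        nlinarith [sq_nonneg x.1]
    obtain ⟨E, hEs, hE, hE2⟩ :
        ∃ E, E = Real.sqrt (x.1 ^ 2 + x.2 ^ 2) ∧ 0 < E ∧ E ^ 2 = x.1 ^ 2 + x.2 ^ 2 :=
      ⟨_, rfl, Real.sqrt_pos.mpr hxx, Real.sq_sqrt hxx.le⟩
    rw [← hEs]
    apply assocGauge_eq
    · intro y hy
      unfold aG at hy
      rw [div_eq_one_iff_eq hc.ne'] at hy
      have ht0 : 0 ≤ Real.sqrt ((1 - b ^ 2) * y.1 ^ 2 + y.2 ^ 2) := Real.sqrt_nonneg _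
      have ht2 : Real.sqrt ((1 - b ^ 2) * y.1 ^ 2 + y.2 ^ 2) ^ 2
          = (1 - b ^ 2) * y.1 ^ 2 + y.2 ^ 2 := Real.sq_sqrt (by positivity)
      obtain ⟨t, htd⟩ : ∃ t, t = Real.sqrt ((1 - b ^ 2) * y.1 ^ 2 + y.2 ^ 2) := ⟨_, rfl⟩
      rw [← htd] at hy ht0 ht2
      have ht : t = (1 - b ^ 2) + b * y.2 := by linarith
      have hQ2 : ((1 - b ^ 2) + b * y.2) ^ 2 = (1 - b ^ 2) * y.1 ^ 2 + y.2 ^ 2 := by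
        rw [← ht]; exact ht2
      have h1 : y.1 ^ 2 + y.2 ^ 2 = (1 - b ^ 2) + 2 * b * y.2 := by
        have h' : (1 - b ^ 2) * (y.1 ^ 2 + y.2 ^ 2)
            = (1 - b ^ 2) * ((1 - b ^ 2) + 2 * b * y.2) := by
          linear_combination -hQ2
        exact mul_left_cancel₀ hc.ne' h'
      have hpq : y.1 ^ 2 + (y.2 - b) ^ 2 = 1 := by linear_combination h1
      have hcs := cs x.2 (-x.1) y.1 (y.2 - b) hpq
      have e : x.2 ^ 2 + (-x.1) ^ 2 = E ^ 2 := by linear_combination -hE2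
      rw [e, Real.sqrt_sq hE.le] at hcs
      unfold det2
      nlinarith [hcs]
    · refine ⟨(x.2 / E, b - x.1 / E), ?_, ?_⟩
      · unfold aG
        have hbx : b * x.1 < E := by
          nlinarith [hE2, mul_pos hE hE, sq_nonneg x.2,
            mul_nonneg hc.le (sq_nonneg x.1)]
        have key2 : (1 - b ^ 2) * (x.2 / E) ^ 2 + (b - x.1 / E) ^ 2
            = (1 - b * x.1 / E) ^ 2 := by
          field_simp
          linear_combination (b ^ 2 - 1) * hE2
        simp only
        rw [key2, Real.sqrt_sq (by rw [sub_nonneg, div_le_one hE]; linarith)]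
        rw [div_eq_one_iff_eq hc.ne']
        field_simp
        ring
      · unfold det2
        simp only
        field_simp
        linear_combination -hE2

theorem randers_assoc_assoc (b : ℝ) (hb : |b| < 1) :
    ∀ x : ℝ × ℝ,
      assocGauge (assocGauge (randers b)) x = Real.sqrt (x.1 ^ 2 + x.2 ^ 2) - b * x.1 ∧
      assocGauge (assocGauge (randers b)) x = randers b (-x) := by
  intro x
  have h1 : assocGauge (randers b) = aG b := funext (step1 hb)
  rw [h1]
  have h2 := step2 hb x
  refine ⟨h2, ?_⟩
  rw [h2]
  unfold randers
  simp only [Prod.fst_neg, Prod.snd_neg, neg_sq]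
  ring
end
end

section
/- Let D be a triangle in ℝ² with the origin as interior point and vertices p=(p₁,p₂), q=(q₁,q₂), r=(r₁,r₂) (in counterclockwise order), and let F be the gauge whose unit disk is D. Then the unit disk of the associated gauge F_a is the set {x : p₁x₂ − p₂x₁ ≤ 1, q₁x₂ − q₂x₁ ≤ 1, r₁x₂ − r₂x₁ ≤ 1}, a triangle with vertices (q−p)/(p₁q₂−p₂q₁), (r−q)/(q₁r₂−q₂r₁), and (p−r)/(r₁p₂−r₂p₁). -/
/-!
Since `0` is interior to the closed convex triangle `D`, its gauge is `1` exactly on the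
boundary of `D`, and a point of `D` at which a linear functional attains a positive maximum over
`D` lies on that boundary; each vertex is such a point. As `y ↦ [y, x]` is linear, its supremum
over the boundary is therefore its maximum over `D`, attained at a vertex:
`F_a(x) = max ([p, x], [q, x], [r, x])`.

The point `(q - p) / [p, q]` is where the lines `[p, x] = 1` and `[q, x] = 1` meet. With
`S = [p, q] + [q, r] + [r, p]`, a point `x` of the three half-planes has the nonnegative
barycentric coordinates `[p, q] (1 - [r, x]) / S`, `[q, r] (1 - [p, x]) / S`, `[r, p] (1 - [q, x]) / S`
with respect to these three points.
-/

open Pointwise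

noncomputable section

/-- The gauge (Minkowski functional) of a convex body `D` with `0` in its interior. -/
def gaugeOf (D : Set (ℝ × ℝ)) (x : ℝ × ℝ) : ℝ := sInf {l : ℝ | 0 < l ∧ x ∈ l • D}

open Topology

lemma Set.insert_insert_singleton_rotate {α : Type*} (a b c : α) :
    ({b, c, a} : Set α) = {a, b, c} := by
  ext
  simp only [Set.mem_insert_iff, Set.mem_singleton_iff]
  tauto

lemma isMaxOn_convexHull_of_forall_le {𝕜 E : Type*} [Field 𝕜] [LinearOrder 𝕜]
    [IsStrictOrderedRing 𝕜] [AddCommGroup E] [Module 𝕜 E] (f : E →ₗ[𝕜] 𝕜) {s : Set E} {v : E}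
    (h : ∀ w ∈ s, f w ≤ f v) : IsMaxOn f (convexHull 𝕜 s) v :=
  fun _ hy => convexHull_min h (convex_halfSpace_le f.isLinear (f v)) hy

lemma gauge_eq_one_of_isMaxOn {E : Type*} [AddCommGroup E] [Module ℝ E] {D : Set E}
    (hD : Absorbent ℝ D) (f : E →ₗ[ℝ] ℝ) {v : E} (hv : v ∈ D) (hmax : IsMaxOn f D v)
    (hpos : 0 < f v) : gauge D v = 1 := by
  refine le_antisymm (gauge_le_one_of_mem hv) (not_lt.mp fun hlt => ?_)
  obtain ⟨b, hb0, hb1, y, hy, rfl⟩ := exists_lt_of_gauge_lt hD hlt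
  have : f y ≤ b * f y := by simpa using hmax hy
  rw [map_smul, smul_eq_mul] at hpos
  nlinarith

lemma smul_add_smul_add_smul_mem_convexHull {𝕜 E : Type*} [Field 𝕜] [LinearOrder 𝕜]
    [IsStrictOrderedRing 𝕜] [AddCommGroup E] [Module 𝕜 E] {a b c : 𝕜} (ha : 0 ≤ a) (hb : 0 ≤ b)
    (hc : 0 ≤ c) (habc : a + b + c = 1) (u v w : E) :
    a • u + b • v + c • w ∈ convexHull 𝕜 {u, v, w} := by
  have := (convex_convexHull 𝕜 {u, v, w}).sum_mem (t := Finset.univ) (w := ![a, b, c])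
    (z := ![u, v, w]) (by intro i _; fin_cases i <;> simpa)
    (by simpa [Fin.sum_univ_three] using habc)
    (by intro i _; fin_cases i <;> exact subset_convexHull 𝕜 _ (by simp))
  simpa [Fin.sum_univ_three] using this

lemma gaugeOf_eq_gauge (D : Set (ℝ × ℝ)) : gaugeOf D = gauge D := rfl

lemma det2_self (x : ℝ × ℝ) : det2 x x = 0 := by
  unfold det2; ring

lemma det2_swap (x y : ℝ × ℝ) : det2 y x = -det2 x y := by
  unfold det2; ring

def det2Bilin : ℝ × ℝ →ₗ[ℝ] ℝ × ℝ →ₗ[ℝ] ℝ :=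
  LinearMap.mk₂ ℝ det2
    (fun x y z => by simp only [det2, Prod.fst_add, Prod.snd_add]; ring)
    (fun c x y => by simp only [det2, Prod.smul_fst, Prod.smul_snd, smul_eq_mul]; ring)
    (fun x y z => by simp only [det2, Prod.fst_add, Prod.snd_add]; ring)
    (fun c x y => by simp only [det2, Prod.smul_fst, Prod.smul_snd, smul_eq_mul]; ring)

@[simp]
lemma det2Bilin_apply (x y : ℝ × ℝ) : det2Bilin x y = det2 x y := rfl

lemma convex_setOf_forall_det2_le (s : Set (ℝ × ℝ)) (c : ℝ) :
    Convex ℝ {x | ∀ v ∈ s, det2 v x ≤ c} := by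
  have : {x | ∀ v ∈ s, det2 v x ≤ c} = ⋂ v ∈ s, {x | det2Bilin v x ≤ c} := by
    ext; simp
  rw [this]
  exact convex_iInter₂ fun v _ => convex_halfSpace_le (det2Bilin v).isLinear c

lemma gauge_convexHull_triple_left {p q r : ℝ × ℝ} (h0 : convexHull ℝ {p, q, r} ∈ 𝓝 0)
    (hpq : 0 < det2 p q) (hqr : 0 < det2 q r) (hrp : 0 < det2 r p) :
    gauge (convexHull ℝ {p, q, r}) p = 1 := by
  have hp : det2 p (q - r) = det2 p q + det2 r p := by
    simp only [det2, Prod.fst_sub, Prod.snd_sub]; ring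
  have hq : det2 q (q - r) = -det2 q r := by
    simp only [det2, Prod.fst_sub, Prod.snd_sub]; ring
  have hr : det2 r (q - r) = -det2 q r := by
    simp only [det2, Prod.fst_sub, Prod.snd_sub]; ring
  refine gauge_eq_one_of_isMaxOn (absorbent_nhds_zero h0) (det2Bilin.flip (q - r))
    (subset_convexHull ℝ _ (by simp)) (isMaxOn_convexHull_of_forall_le _ ?_) ?_
  · simp only [Set.forall_mem_insert, Set.mem_singleton_iff, forall_eq, LinearMap.flip_apply,
      det2Bilin_apply, hp, hq, hr]
    exact ⟨le_rfl, by linarith, by linarith⟩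
  · simp only [LinearMap.flip_apply, det2Bilin_apply, hp]
    linarith

lemma assocGauge_gauge_convexHull {s : Set (ℝ × ℝ)} (hs : s.Finite)
    (h0 : convexHull ℝ s ∈ 𝓝 0) (hs1 : ∀ v ∈ s, gauge (convexHull ℝ s) v = 1)
    {x v₀ : ℝ × ℝ} (hv₀ : v₀ ∈ s) (hmax : ∀ v ∈ s, det2 v x ≤ det2 v₀ x) :
    assocGauge (gauge (convexHull ℝ s)) x = det2 v₀ x := by
  refine IsGreatest.csSup_eq ⟨⟨v₀, hs1 v₀ hv₀, rfl⟩, ?_⟩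
  rintro _ ⟨y, hy, rfl⟩
  have hyD : y ∈ convexHull ℝ s := by
    rw [← (hs.isCompact_convexHull (𝕜 := ℝ)).isClosed.closure_eq,
      ← gauge_le_one_iff_mem_closure (convex_convexHull ℝ s) h0]
    exact hy.le
  exact isMaxOn_convexHull_of_forall_le (det2Bilin.flip x) hmax hyD

lemma assocGauge_gauge_convexHull_le_one_iff {s : Set (ℝ × ℝ)} (hs : s.Finite)
    (h0 : convexHull ℝ s ∈ 𝓝 0) (hs1 : ∀ v ∈ s, gauge (convexHull ℝ s) v = 1) (x : ℝ × ℝ) :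
    assocGauge (gauge (convexHull ℝ s)) x ≤ 1 ↔ ∀ v ∈ s, det2 v x ≤ 1 := by
  have hne : s.Nonempty := convexHull_nonempty_iff.mp (Filter.nonempty_of_mem h0)
  obtain ⟨v₀, hv₀, hmax⟩ := Set.exists_max_image s (det2 · x) hs hne
  rw [assocGauge_gauge_convexHull hs h0 hs1 hv₀ hmax]
  exact ⟨fun h v hv => (hmax v hv).trans h, fun h => h v₀ hv₀⟩

def dualVertex (p q : ℝ × ℝ) : ℝ × ℝ := (1 / det2 p q) • (q - p)

lemma det2_dualVertex (v p q : ℝ × ℝ) :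
    det2 v (dualVertex p q) = (det2 v q - det2 v p) / det2 p q := by
  simp only [dualVertex, det2, Prod.smul_fst, Prod.smul_snd, Prod.fst_sub, Prod.snd_sub,
    smul_eq_mul]
  ring

lemma smul_dualVertex {p q : ℝ × ℝ} (h : det2 p q ≠ 0) (c : ℝ) :
    (det2 p q * c) • dualVertex p q = c • (q - p) := by
  rw [dualVertex, smul_smul, mul_one_div, mul_div_cancel_left₀ c h]

lemma forall_det2_dualVertex_le_one {p q r : ℝ × ℝ} (hpq : 0 < det2 p q) (hqr : 0 < det2 q r)
    (hrp : 0 < det2 r p) : ∀ v ∈ ({p, q, r} : Set (ℝ × ℝ)), det2 v (dualVertex p q) ≤ 1 := by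
  simp only [Set.forall_mem_insert, Set.mem_singleton_iff, forall_eq, det2_dualVertex,
    det2_self, det2_swap p q, det2_swap q r, div_le_one hpq]
  exact ⟨by linarith, by linarith, by linarith⟩

lemma mem_convexHull_dualVertex {p q r x : ℝ × ℝ} (hpq : 0 < det2 p q) (hqr : 0 < det2 q r)
    (hrp : 0 < det2 r p) (hx : ∀ v ∈ ({p, q, r} : Set (ℝ × ℝ)), det2 v x ≤ 1) :
    x ∈ convexHull ℝ {dualVertex p q, dualVertex q r, dualVertex r p} := by
  simp only [Set.forall_mem_insert, Set.mem_singleton_iff, forall_eq] at hx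
  obtain ⟨hpx, hqx, hrx⟩ := hx
  set S := det2 p q + det2 q r + det2 r p
  have hS : 0 < S := by positivity
  have hx : ((1 - det2 r x) / S) • (q - p) + ((1 - det2 p x) / S) • (r - q)
      + ((1 - det2 q x) / S) • (p - r) = x := by
    ext <;> simp only [Prod.fst_add, Prod.snd_add, Prod.smul_fst, Prod.smul_snd, Prod.fst_sub,
      Prod.snd_sub, smul_eq_mul] <;> field_simp <;> simp only [S, det2] <;> ring
  rw [← hx, ← smul_dualVertex hpq.ne', ← smul_dualVertex hqr.ne', ← smul_dualVertex hrp.ne']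
  refine smul_add_smul_add_smul_mem_convexHull ?_ ?_ ?_ ?_ _ _ _
  · exact mul_nonneg hpq.le (div_nonneg (by linarith) hS.le)
  · exact mul_nonneg hqr.le (div_nonneg (by linarith) hS.le)
  · exact mul_nonneg hrp.le (div_nonneg (by linarith) hS.le)
  · field_simp
    simp only [S, det2]
    ring

lemma setOf_forall_det2_le_one_eq_convexHull_dualVertex {p q r : ℝ × ℝ} (hpq : 0 < det2 p q)
    (hqr : 0 < det2 q r) (hrp : 0 < det2 r p) :
    {x | ∀ v ∈ ({p, q, r} : Set (ℝ × ℝ)), det2 v x ≤ 1} =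
      convexHull ℝ {dualVertex p q, dualVertex q r, dualVertex r p} := by
  refine Set.Subset.antisymm (fun x hx => mem_convexHull_dualVertex hpq hqr hrp hx)
    (convexHull_min ?_ (convex_setOf_forall_det2_le _ 1))
  rintro _ (rfl | rfl | rfl)
  · exact forall_det2_dualVertex_le_one hpq hqr hrp
  · rw [← Set.insert_insert_singleton_rotate]
    exact forall_det2_dualVertex_le_one hqr hrp hpq
  · rw [Set.insert_insert_singleton_rotate]
    exact forall_det2_dualVertex_le_one hrp hpq hqr

theorem triangle_assocGauge_unit_disk (p q r : ℝ × ℝ)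
    (h0 : (0 : ℝ × ℝ) ∈ interior (convexHull ℝ {p, q, r}))
    (hccw : det2 p q > 0 ∧ det2 q r > 0 ∧ det2 r p > 0) :
    {x : ℝ × ℝ | assocGauge (gaugeOf (convexHull ℝ {p, q, r})) x ≤ 1} =
      {x : ℝ × ℝ | p.1 * x.2 - p.2 * x.1 ≤ 1 ∧ q.1 * x.2 - q.2 * x.1 ≤ 1 ∧
        r.1 * x.2 - r.2 * x.1 ≤ 1} ∧
    {x : ℝ × ℝ | p.1 * x.2 - p.2 * x.1 ≤ 1 ∧ q.1 * x.2 - q.2 * x.1 ≤ 1 ∧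
        r.1 * x.2 - r.2 * x.1 ≤ 1} =
      convexHull ℝ {(1 / (p.1 * q.2 - p.2 * q.1)) • (q - p),
        (1 / (q.1 * r.2 - q.2 * r.1)) • (r - q),
        (1 / (r.1 * p.2 - r.2 * p.1)) • (p - r)} := by
  obtain ⟨hpq, hqr, hrp⟩ := hccw
  have hD : convexHull ℝ {p, q, r} ∈ 𝓝 0 := mem_interior_iff_mem_nhds.mp h0
  have hvertices : ∀ v ∈ ({p, q, r} : Set (ℝ × ℝ)), gauge (convexHull ℝ {p, q, r}) v = 1 := by
    simp only [Set.forall_mem_insert, Set.mem_singleton_iff, forall_eq]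
    refine ⟨gauge_convexHull_triple_left hD hpq hqr hrp, ?_, ?_⟩
    · rw [← Set.insert_insert_singleton_rotate p q r] at hD ⊢
      exact gauge_convexHull_triple_left hD hqr hrp hpq
    · rw [Set.insert_insert_singleton_rotate r p q] at hD ⊢
      exact gauge_convexHull_triple_left hD hrp hpq hqr
  have hdisk : {x | ∀ v ∈ ({p, q, r} : Set (ℝ × ℝ)), det2 v x ≤ 1} =
      {x : ℝ × ℝ | p.1 * x.2 - p.2 * x.1 ≤ 1 ∧ q.1 * x.2 - q.2 * x.1 ≤ 1 ∧
        r.1 * x.2 - r.2 * x.1 ≤ 1} := by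
    ext
    simp only [Set.mem_ofPred_eq, Set.forall_mem_insert, Set.mem_singleton_iff, forall_eq]
    rfl
  rw [← hdisk, gaugeOf_eq_gauge]
  exact ⟨Set.ext (assocGauge_gauge_convexHull_le_one_iff (Set.toFinite _) hD hvertices),
    setOf_forall_det2_le_one_eq_convexHull_dualVertex hpq hqr hrp⟩
end
end

section
/- Let F be a gauge on ℝ², smooth on ℝ² \ {0} with strictly convex smooth unit circle, and let γ = (γ₁,γ₂) be a smooth regular curve with arbitrary parameter. Then the second derivative of γ with respect to F-arc-length satisfies d²γ/ds² = k_m · n_γ where the Minkowski curvature is k_m = (γ₁'γ₂'' − γ₁''γ₂') / F(γ₁',γ₂')³ and n_γ = (−F_{x₂}(γ₁',γ₂'), F_{x₁}(γ₁',γ₂')). -/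
open scoped Topology ContDiff


noncomputable section

/-- Partial derivative of `F` in the first coordinate direction. -/
def Fx1 (F : ℝ × ℝ → ℝ) (x : ℝ × ℝ) : ℝ := fderiv ℝ F x (1, 0)

/-- Partial derivative of `F` in the second coordinate direction. -/
def Fx2 (F : ℝ × ℝ → ℝ) (x : ℝ × ℝ) : ℝ := fderiv ℝ F x (0, 1)


lemma fderiv_apply_pair (F : ℝ × ℝ → ℝ) (x v : ℝ × ℝ) :
    fderiv ℝ F x v = v.1 * Fx1 F x + v.2 * Fx2 F x := by
  have hv : v = v.1 • ((1:ℝ), (0:ℝ)) + v.2 • ((0:ℝ), (1:ℝ)) := by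
    simp [Prod.ext_iff]
  rw [Fx1, Fx2]
  conv_lhs => rw [hv, map_add, map_smul, map_smul]
  simp [smul_eq_mul]

lemma gaugePos {F : ℝ × ℝ → ℝ} (hF : IsGauge F) {x : ℝ × ℝ} (hx : x ≠ 0) : 0 < F x := by
  rcases hF with ⟨h1, h2, -⟩
  exact lt_of_le_of_ne (h1 x) fun h => hx ((h2 x).mp h.symm)

lemma euler {F : ℝ × ℝ → ℝ} (hF : IsGauge F)
    (hsm : ContDiffOn ℝ (⊤ : ℕ∞) F {x : ℝ × ℝ | x ≠ 0}) {x : ℝ × ℝ} (hx : x ≠ 0) :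
    x.1 * Fx1 F x + x.2 * Fx2 F x = F x := by
  have hmem : {x : ℝ × ℝ | x ≠ 0} ∈ nhds x := isOpen_ne.mem_nhds hx
  have hd : DifferentiableAt ℝ F x :=
    ((hsm.contDiffAt hmem).differentiableAt (by simp))
  have hx1 : HasDerivAt (fun t : ℝ => t • x) x 1 := by
    simpa using (hasDerivAt_id (1:ℝ)).smul_const x
  have h1 : HasDerivAt (fun t : ℝ => F (t • x)) (fderiv ℝ F x x) 1 :=
    (show HasFDerivAt F (fderiv ℝ F x) ((1:ℝ) • x) by
      simpa using hd.hasFDerivAt).comp_hasDerivAt 1 hx1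
  have h2 : HasDerivAt (fun t : ℝ => t * F x) (F x) 1 := by
    simpa using (hasDerivAt_id (1:ℝ)).mul_const (F x)
  have heq : (fun t : ℝ => F (t • x)) =ᶠ[nhds 1] (fun t : ℝ => t * F x) := by
    filter_upwards [Ioi_mem_nhds (by norm_num : (0:ℝ) < 1)] with t ht
    exact hF.2.2.1 t x ht
  have h2' : HasDerivAt (fun t : ℝ => F (t • x)) (F x) 1 :=
    h2.congr_of_eventuallyEq heq
  have := h1.unique h2'
  rw [← this, fderiv_apply_pair]

theorem minkowski_curvature_formula (F : ℝ × ℝ → ℝ) (hF : IsGauge F)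
    (hsm : ContDiffOn ℝ (⊤ : ℕ∞) F {x : ℝ × ℝ | x ≠ 0})
    (hSC : StrictConvex ℝ {x : ℝ × ℝ | F x ≤ 1})
    (γ Γ : ℝ → ℝ × ℝ) (σ : ℝ → ℝ)
    (hγ : ContDiff ℝ (⊤ : ℕ∞) γ) (hΓ : ContDiff ℝ (⊤ : ℕ∞) Γ) (hσ : ContDiff ℝ (⊤ : ℕ∞) σ)
    (hreg : ∀ τ, deriv γ τ ≠ 0)
    (harc : ∀ τ, deriv σ τ = F (deriv γ τ))
    (hrepar : ∀ τ, Γ (σ τ) = γ τ)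
    (hunit : ∀ u, F (deriv Γ u) = 1) :
    ∀ τ : ℝ,
      deriv (deriv Γ) (σ τ) =
        (((deriv γ τ).1 * (deriv (deriv γ) τ).2
            - (deriv (deriv γ) τ).1 * (deriv γ τ).2) / (F (deriv γ τ)) ^ 3) •
          ((-(Fx2 F (deriv γ τ)), Fx1 F (deriv γ τ)) : ℝ × ℝ) := by
  have hγ1 : ContDiff ℝ ∞ (deriv γ) := (contDiff_infty_iff_deriv.mp (hγ.of_le (by simp))).2
  have hΓ1 : ContDiff ℝ ∞ (deriv Γ) := (contDiff_infty_iff_deriv.mp (hΓ.of_le (by simp))).2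
  have hγd : ∀ t, HasDerivAt γ (deriv γ t) t :=
    fun t => (hγ.differentiable (by simp) t).hasDerivAt
  have hΓd : ∀ u, HasDerivAt Γ (deriv Γ u) u :=
    fun u => (hΓ.differentiable (by simp) u).hasDerivAt
  have hσd : ∀ t, HasDerivAt σ (deriv σ t) t :=
    fun t => (hσ.differentiable (by simp) t).hasDerivAt
  have hγ1d : ∀ t, HasDerivAt (deriv γ) (deriv (deriv γ) t) t :=
    fun t => (hγ1.differentiable (by norm_num) t).hasDerivAt
  have hΓ1d : ∀ u, HasDerivAt (deriv Γ) (deriv (deriv Γ) u) u :=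
    fun u => (hΓ1.differentiable (by norm_num) u).hasDerivAt
  have hFpos : ∀ t, 0 < F (deriv γ t) := fun t => gaugePos hF (hreg t)
  have hFd : ∀ t, DifferentiableAt ℝ F (deriv γ t) := fun t =>
    ((hsm.contDiffAt (isOpen_ne.mem_nhds (hreg t))).differentiableAt (by simp))
  -- step 1 : deriv Γ (σ t) = (F (deriv γ t))⁻¹ • deriv γ t
  have key1 : ∀ t, deriv Γ (σ t) = (F (deriv γ t))⁻¹ • deriv γ t := by
    intro t
    have hcomp : HasDerivAt (fun s => Γ (σ s)) (deriv σ t • deriv Γ (σ t)) t :=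
      (hΓd (σ t)).scomp t (hσd t)
    have hgam : HasDerivAt (fun s => Γ (σ s)) (deriv γ t) t := by
      have : (fun s => Γ (σ s)) = γ := funext hrepar
      rw [this]; exact hγd t
    have h := hcomp.unique hgam
    rw [harc t] at h
    rw [eq_inv_smul_iff₀ (hFpos t).ne']
    exact h
  intro τ
  set x := deriv γ τ with hx
  set y := deriv (deriv γ) τ with hy
  set f := F x with hf
  have hfne : f ≠ 0 := (hFpos τ).ne'
  -- derivative of t ↦ F (deriv γ t)
  have hg : HasDerivAt (fun t => F (deriv γ t)) (fderiv ℝ F x y) τ :=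
    (hFd τ).hasFDerivAt.comp_hasDerivAt τ (hγ1d τ)
  set L := fderiv ℝ F x y with hL
  -- derivative of the RHS of key1
  have hRHS : HasDerivAt (fun t => (F (deriv γ t))⁻¹ • deriv γ t)
      ((F x)⁻¹ • y + (-L / f ^ 2) • x) τ := by
    have hinv : HasDerivAt (fun t => (F (deriv γ t))⁻¹) (-L / f ^ 2) τ :=
      hg.inv hfne
    exact hinv.smul (hγ1d τ)
  -- derivative of the LHS of key1
  have hLHS : HasDerivAt (fun t => deriv Γ (σ t)) (f • deriv (deriv Γ) (σ τ)) τ := by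
    have := (hΓ1d (σ τ)).scomp τ (hσd τ)
    rwa [harc τ, ← hf] at this
  have hLHS' : HasDerivAt (fun t => (F (deriv γ t))⁻¹ • deriv γ t)
      (f • deriv (deriv Γ) (σ τ)) τ := by
    have : (fun t => deriv Γ (σ t)) = fun t => (F (deriv γ t))⁻¹ • deriv γ t :=
      funext key1
    rwa [this] at hLHS
  have hkey : f • deriv (deriv Γ) (σ τ) = (F x)⁻¹ • y + (-L / f ^ 2) • x :=
    hLHS'.unique hRHS
  have hmain : deriv (deriv Γ) (σ τ) =
      f⁻¹ • ((F x)⁻¹ • y + (-L / f ^ 2) • x) := by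
    rw [← hkey, smul_smul, inv_mul_cancel₀ hfne, one_smul]
  rw [hmain]
  have hE : x.1 * Fx1 F x + x.2 * Fx2 F x = F x := euler hF hsm (hreg τ)
  have hLval : L = y.1 * Fx1 F x + y.2 * Fx2 F x := fderiv_apply_pair F x y
  rw [hLval]
  rw [← hf] at hE
  apply Prod.ext
  · simp only [Prod.smul_fst, Prod.smul_snd, Prod.fst_add, Prod.snd_add,
      smul_eq_mul, ← hf]
    field_simp
    linear_combination (-y.1) * hE
  · simp only [Prod.smul_fst, Prod.smul_snd, Prod.fst_add, Prod.snd_add,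
      smul_eq_mul, ← hf]
    field_simp
    linear_combination (-y.2) * hE
end
end

section
/- Let F be a gauge on ℝ² with smooth strictly convex unit circle, and γ(s) a smooth curve with F(γ'(s)) = 1. Let n_γ(s) ∈ S_a = {F_a = 1} be the right normal vector field (so γ'(s) ⊣_B n_γ(s) and [γ'(s), n_γ(s)] = 1), and write n_γ(s) = ψ(v(s)) where ψ is a counterclockwise parametrization of S_a with F(−ψ'(v)) = 1. Then γ'(s) = −ψ'(v(s)), and consequently n_γ'(s) = −k_n(s)·γ'(s) where k_n(s) = v'(s) is the normal curvature. -/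
noncomputable section

set_option linter.unusedVariables false

namespace Aux

variable {F : ℝ × ℝ → ℝ}

lemma gauge_zero (hF : IsGauge F) : F 0 = 0 := (hF.2.1 0).mpr rfl

lemma smul_bound (hF : IsGauge F) (a : ℝ) (b : ℝ × ℝ) :
    F (a • b) ≤ |a| * (F b + F (-b)) := by
  rcases lt_trichotomy a 0 with h | h | h
  · rw [show a • b = (-a) • (-b) by ext <;> simp, hF.2.2.1 (-a) (-b) (by linarith),
      abs_of_neg h]
    nlinarith [hF.1 b, hF.1 (-b)]
  · subst h; rw [zero_smul, gauge_zero hF]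
    have := hF.1 b; have := hF.1 (-b); positivity
  · rw [hF.2.2.1 a b h, abs_of_pos h]
    nlinarith [hF.1 b, hF.1 (-b)]

lemma gauge_le (hF : IsGauge F) :
    ∃ C > 0, ∀ x : ℝ × ℝ, F x ≤ C * (|x.1| + |x.2|) := by
  set C : ℝ := F (1,0) + F (-1,0) + F (0,1) + F (0,-1) + 1 with hC
  have hCpos : 0 < C := by
    have := hF.1 (1,0); have := hF.1 (-1,0); have := hF.1 (0,1); have := hF.1 (0,-1)
    positivity
  refine ⟨C, hCpos, fun x => ?_⟩
  have hx : x = x.1 • ((1:ℝ),(0:ℝ)) + x.2 • ((0:ℝ),(1:ℝ)) := by ext <;> simp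
  calc F x ≤ F (x.1 • ((1:ℝ),(0:ℝ))) + F (x.2 • ((0:ℝ),(1:ℝ))) := by
        conv_lhs => rw [hx]
        exact hF.2.2.2 _ _
    _ ≤ |x.1| * (F (1,0) + F (-1,0)) + |x.2| * (F (0,1) + F (0,-1)) := by
        have h1 := smul_bound hF x.1 ((1:ℝ),(0:ℝ))
        have h2 := smul_bound hF x.2 ((0:ℝ),(1:ℝ))
        norm_num at h1 h2 ⊢; exact add_le_add h1 h2
    _ ≤ C * (|x.1| + |x.2|) := by
        have := hF.1 (1,0); have := hF.1 (-1,0); have := hF.1 (0,1); have := hF.1 (0,-1)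
        have := abs_nonneg x.1; have := abs_nonneg x.2
        nlinarith

lemma gauge_continuous (hF : IsGauge F) : Continuous F := by
  obtain ⟨C, hC, hb⟩ := gauge_le hF
  have key : ∀ x y : ℝ × ℝ, F x - F y ≤ C * (|x.1 - y.1| + |x.2 - y.2|) := by
    intro x y
    have := hF.2.2.2 y (x - y)
    have hb' := hb (x - y)
    simp only [Prod.fst_sub, Prod.snd_sub] at hb'
    have : F x ≤ F y + F (x - y) := by
      have h := hF.2.2.2 y (x - y); simpa using h
    linarith
  have lip : LipschitzWith (Real.toNNReal (2 * C)) F := by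
    apply LipschitzWith.of_dist_le_mul
    intro x y
    rw [Real.dist_eq, Real.coe_toNNReal _ (by positivity)]
    have h1 := key x y
    have h2 := key y x
    have d1 : |x.1 - y.1| ≤ dist x y := by
      rw [Prod.dist_eq, ← Real.dist_eq]; exact le_max_left _ _
    have d2 : |x.2 - y.2| ≤ dist x y := by
      rw [Prod.dist_eq, ← Real.dist_eq]; exact le_max_right _ _
    have d1' : |y.1 - x.1| ≤ dist x y := by rw [abs_sub_comm]; exact d1
    have d2' : |y.2 - x.2| ≤ dist x y := by rw [abs_sub_comm]; exact d2
    rw [abs_le]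
    constructor <;> nlinarith
  exact lip.continuous

end Aux

namespace Aux

lemma gauge_pos (hF : IsGauge F) {x : ℝ × ℝ} (hx : x ≠ 0) : 0 < F x :=
  lt_of_le_of_ne (hF.1 x) (fun h => hx ((hF.2.1 x).mp h.symm))

lemma sphere_compact (hF : IsGauge F) : IsCompact {y : ℝ × ℝ | F y = 1} := by
  have hcont := gauge_continuous hF
  have hclosed : IsClosed {y : ℝ × ℝ | F y = 1} :=
    isClosed_singleton.preimage hcont
  -- lower bound: min of F on the euclidean sphere
  obtain ⟨x₀, hx₀mem, hx₀min⟩ :=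
    (isCompact_sphere (0 : ℝ × ℝ) 1).exists_isMinOn
      (NormedSpace.sphere_nonempty.mpr zero_le_one) hcont.continuousOn
  have hx₀ : x₀ ≠ 0 := by
    intro h; rw [Metric.mem_sphere, h] at hx₀mem; simp at hx₀mem
  have hc : 0 < F x₀ := gauge_pos hF hx₀
  have hbound : ∀ y : ℝ × ℝ, F y = 1 → ‖y‖ ≤ (F x₀)⁻¹ := by
    intro y hy
    have hy0 : y ≠ 0 := by rintro rfl; rw [gauge_zero hF] at hy; norm_num at hy
    have hny : 0 < ‖y‖ := norm_pos_iff.mpr hy0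
    have hu : ‖y‖⁻¹ • y ∈ Metric.sphere (0 : ℝ × ℝ) 1 := by
      simp [norm_smul, abs_of_pos (inv_pos.mpr hny), inv_mul_cancel₀ (ne_of_gt hny)]
    have h1 : F x₀ ≤ F (‖y‖⁻¹ • y) := hx₀min hu
    have h2 : F (‖y‖⁻¹ • y) = ‖y‖⁻¹ * F y := hF.2.2.1 _ _ (inv_pos.mpr hny)
    rw [h2, hy, mul_one] at h1
    rw [← inv_inv ‖y‖]
    exact inv_anti₀ hc h1
  refine (isCompact_closedBall (0 : ℝ × ℝ) (F x₀)⁻¹).of_isClosed_subset hclosed ?_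
  intro y hy
  rw [Metric.mem_closedBall, dist_zero_right]
  exact hbound y hy

lemma det2_smul_left (c : ℝ) (y x : ℝ × ℝ) : det2 (c • y) x = c * det2 y x := by
  simp [det2]; ring

lemma det2_add_left (y z x : ℝ × ℝ) : det2 (y + z) x = det2 y x + det2 z x := by
  simp [det2]; ring

lemma det2_neg_left (y x : ℝ × ℝ) : det2 (-y) x = - det2 y x := by
  simp [det2]; ring

lemma assoc_le (hF : IsGauge F) {y x : ℝ × ℝ} (hy : F y = 1) :
    det2 y x ≤ assocGauge F x := by
  have hbdd : BddAbove {d : ℝ | ∃ y, F y = 1 ∧ d = det2 y x} := by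
    have : {d : ℝ | ∃ y, F y = 1 ∧ d = det2 y x} = (fun y => det2 y x) '' {y | F y = 1} := by
      ext d; simp [eq_comm]
    rw [this]
    exact ((sphere_compact hF).image (by continuity)).bddAbove
  exact le_csSup hbdd ⟨y, hy, rfl⟩

lemma assoc_attained (hF : IsGauge F) (hne : ∃ y₀ : ℝ × ℝ, F y₀ = 1) (x : ℝ × ℝ) :
    ∃ y, F y = 1 ∧ det2 y x = assocGauge F x := by
  obtain ⟨y₀, hy₀⟩ := hne
  have himg : {d : ℝ | ∃ y, F y = 1 ∧ d = det2 y x} = (fun y => det2 y x) '' {y | F y = 1} := by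
    ext d; simp [eq_comm]
  have hcpt : IsCompact ((fun y => det2 y x) '' {y | F y = 1}) :=
    (sphere_compact hF).image (by continuity)
  have hmem : sSup ((fun y => det2 y x) '' {y | F y = 1}) ∈
      (fun y => det2 y x) '' {y | F y = 1} :=
    hcpt.sSup_mem ⟨_, ⟨y₀, hy₀, rfl⟩⟩
  obtain ⟨y, hy, hval⟩ := hmem
  exact ⟨y, hy, by simp only at hval; rw [hval, assocGauge, himg]⟩

end Aux

namespace Aux

lemma tangent_det (hF : IsGauge F) (ψ : ℝ → ℝ × ℝ) (hψ : ContDiff ℝ (⊤ : ℕ∞) ψ)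
    (hψa : ∀ u, assocGauge F (ψ u) = 1)
    (hψspeed : ∀ u, F (-(deriv ψ u)) = 1)
    (hψccw : ∀ u, det2 (ψ u) (deriv ψ u) > 0) :
    ∀ u, det2 (ψ u) (deriv ψ u) = 1 := by
  intro u₀
  set g : ℝ := det2 (ψ u₀) (deriv ψ u₀) with hg
  have hgpos : 0 < g := hψccw u₀
  have hne : ∃ y₀ : ℝ × ℝ, F y₀ = 1 := ⟨_, hψspeed 0⟩
  obtain ⟨y, hyS, hymax⟩ := assoc_attained hF hne (ψ u₀)
  rw [hψa u₀] at hymax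
  -- the function t ↦ det2 y (ψ t) has a max at u₀
  have hd : ∀ t, HasDerivAt (fun t => det2 y (ψ t)) (det2 y (deriv ψ t)) t := by
    intro t
    have hdiff : HasDerivAt ψ (deriv ψ t) t :=
      ((hψ.differentiable (by simp)) t).hasDerivAt
    have h1 : HasDerivAt (fun t => (ψ t).1) (deriv ψ t).1 t := hdiff.fst
    have h2 : HasDerivAt (fun t => (ψ t).2) (deriv ψ t).2 t := hdiff.snd
    have : HasDerivAt (fun t => y.1 * (ψ t).2 - y.2 * (ψ t).1)
        (y.1 * (deriv ψ t).2 - y.2 * (deriv ψ t).1) t :=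
      (h2.const_mul y.1).sub (h1.const_mul y.2)
    exact this
  have hmax : IsLocalMax (fun t => det2 y (ψ t)) u₀ := by
    apply Filter.Eventually.of_forall
    intro t
    simp only
    rw [hymax]
    exact (assoc_le hF hyS).trans_eq (hψa t)
  have hderiv0 : det2 y (deriv ψ u₀) = 0 := by
    have := hmax.deriv_eq_zero
    rwa [(hd u₀).deriv] at this
  -- solve for y : y = (-1/g) • deriv ψ u₀
  have e1 : y.1 * (ψ u₀).2 - y.2 * (ψ u₀).1 = 1 := hymax
  have e2 : y.1 * (deriv ψ u₀).2 - y.2 * (deriv ψ u₀).1 = 0 := hderiv0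
  have e3 : (ψ u₀).1 * (deriv ψ u₀).2 - (ψ u₀).2 * (deriv ψ u₀).1 = g := rfl
  have hc1 : g * y.1 = -(deriv ψ u₀).1 := by
    linear_combination (ψ u₀).1 * e2 - (deriv ψ u₀).1 * e1 - y.1 * e3
  have hc2 : g * y.2 = -(deriv ψ u₀).2 := by
    linear_combination (ψ u₀).2 * e2 - (deriv ψ u₀).2 * e1 - y.2 * e3
  have hyeq : y = g⁻¹ • (-(deriv ψ u₀)) := by
    have hg0 : g ≠ 0 := ne_of_gt hgpos
    ext
    · rw [Prod.smul_fst, Prod.fst_neg, smul_eq_mul]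
      field_simp
      linear_combination hc1
    · rw [Prod.smul_snd, Prod.snd_neg, smul_eq_mul]
      field_simp
      linear_combination hc2
  have : F y = g⁻¹ * F (-(deriv ψ u₀)) := by
    rw [hyeq]; exact hF.2.2.1 _ _ (inv_pos.mpr hgpos)
  rw [hyS, hψspeed u₀, mul_one] at this
  have : g = 1 := by
    field_simp at this; linarith
  linarith [this]

end Aux

namespace Aux

lemma unique_max (hF : IsGauge F)
    (hSC : StrictConvex ℝ {x : ℝ × ℝ | F x ≤ 1})
    {x z₁ z₂ : ℝ × ℝ} (hx : assocGauge F x = 1) (hx0 : x ≠ 0)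
    (h1 : F z₁ = 1) (h2 : F z₂ = 1)
    (d1 : det2 z₁ x = 1) (d2 : det2 z₂ x = 1) : z₁ = z₂ := by
  by_contra hne
  -- every point of K = {F ≤ 1} has det2 · x ≤ 1
  have hsup : ∀ w : ℝ × ℝ, F w ≤ 1 → det2 w x ≤ 1 := by
    intro w hw
    rcases eq_or_ne w 0 with rfl | hw0
    · simp [det2]
    · have hFw : 0 < F w := gauge_pos hF hw0
      have hu : F ((F w)⁻¹ • w) = 1 := by
        rw [hF.2.2.1 _ _ (inv_pos.mpr hFw), inv_mul_cancel₀ (ne_of_gt hFw)]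
      have hle : det2 ((F w)⁻¹ • w) x ≤ 1 := by
        rw [← hx]; exact assoc_le hF hu
      rw [det2_smul_left] at hle
      rcases le_or_gt (det2 w x) 0 with h | h
      · linarith
      · have := (inv_mul_le_iff₀ hFw).mp hle
        linarith [this]
  -- midpoint lies in the interior
  have hm : (1/2 : ℝ) • z₁ + (1/2 : ℝ) • z₂ ∈ interior {x : ℝ × ℝ | F x ≤ 1} :=
    hSC (le_of_eq h1) (le_of_eq h2) hne (by norm_num) (by norm_num) (by norm_num)
  obtain ⟨ε, hε, hball⟩ := Metric.mem_nhds_iff.mp (mem_interior_iff_mem_nhds.mp hm)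
  set m := (1/2 : ℝ) • z₁ + (1/2 : ℝ) • z₂ with hmdef
  have hmval : det2 m x = 1 := by
    rw [hmdef, det2_add_left, det2_smul_left, det2_smul_left, d1, d2]; norm_num
  -- perturb in the direction p = (x.2, -x.1)
  set p : ℝ × ℝ := (x.2, -x.1) with hpdef
  have hpval : det2 p x = x.1^2 + x.2^2 := by simp [det2, hpdef]; ring
  have hx00 : x.1 ≠ 0 ∨ x.2 ≠ 0 := by
    by_contra hc; push_neg at hc
    exact hx0 (Prod.ext hc.1 hc.2)
  have hppos : 0 < x.1^2 + x.2^2 := by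
    rcases hx00 with h | h <;> positivity
  have hpnorm : 0 < ‖p‖ := by
    rw [norm_pos_iff]
    intro h
    rw [hpdef, Prod.mk_eq_zero] at h
    rcases hx00 with hh | hh
    · exact hh (neg_eq_zero.mp h.2)
    · exact hh h.1
  -- the perturbed point
  set w : ℝ × ℝ := m + (ε / (2 * ‖p‖)) • p with hwdef
  have hδ : 0 < ε / (2 * ‖p‖) := by positivity
  have hwK : F w ≤ 1 := by
    have : w ∈ Metric.ball m ε := by
      rw [Metric.mem_ball, hwdef, dist_self_add_left, norm_smul,
        Real.norm_eq_abs, abs_of_pos hδ]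
      rw [div_mul_eq_mul_div, mul_comm 2 ‖p‖, ← div_div,
        mul_div_assoc, div_self (ne_of_gt hpnorm), mul_one]
      linarith
    exact hball this
  have hwval : det2 w x = 1 + (ε / (2 * ‖p‖)) * (x.1^2 + x.2^2) := by
    rw [hwdef, det2_add_left, det2_smul_left, hmval, hpval]
  have := hsup w hwK
  rw [hwval] at this
  nlinarith


end Aux


namespace Aux

lemma det2_antisymm (x y : ℝ × ℝ) : det2 x y = - det2 y x := by
  simp [det2]; ring

end Aux


theorem normal_curvature_frenet (F : ℝ × ℝ → ℝ) (hF : IsGauge F)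
    (hSC : StrictConvex ℝ {x : ℝ × ℝ | F x ≤ 1})
    (γ nγ ψ : ℝ → ℝ × ℝ) (v : ℝ → ℝ)
    (hγ : ContDiff ℝ (⊤ : ℕ∞) γ) (hn : ContDiff ℝ (⊤ : ℕ∞) nγ) (hψ : ContDiff ℝ (⊤ : ℕ∞) ψ)
    (hv : ContDiff ℝ (⊤ : ℕ∞) v)
    (hunit : ∀ s, F (deriv γ s) = 1)
    (hna : ∀ s, assocGauge F (nγ s) = 1)
    (hB : ∀ s, det2 (deriv γ s) (nγ s) = F (deriv γ s) * assocGauge F (nγ s))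
    (hψa : ∀ u, assocGauge F (ψ u) = 1)
    (hψspeed : ∀ u, F (-(deriv ψ u)) = 1)
    (hψccw : ∀ u, det2 (ψ u) (deriv ψ u) > 0)
    (hnψ : ∀ s, nγ s = ψ (v s)) :
    ∀ s : ℝ,
      deriv γ s = -(deriv ψ (v s)) ∧
      deriv nγ s = (-(deriv v s)) • deriv γ s := by
  intro s
  have htan : ∀ u, det2 (ψ u) (deriv ψ u) = 1 :=
    Aux.tangent_det hF ψ hψ hψa hψspeed hψccw
  have hx0 : ψ (v s) ≠ 0 := by
    intro h
    have := hψccw (v s)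
    rw [h] at this
    simp [det2] at this
  have d1 : det2 (deriv γ s) (ψ (v s)) = 1 := by
    have h := hB s
    rw [hunit s, hna s, one_mul, hnψ s] at h
    exact h
  have d2 : det2 (-(deriv ψ (v s))) (ψ (v s)) = 1 := by
    rw [Aux.det2_neg_left, Aux.det2_antisymm, neg_neg]
    exact htan (v s)
  have goal1 : deriv γ s = -(deriv ψ (v s)) :=
    Aux.unique_max hF hSC (hψa (v s)) hx0 (hunit s) (hψspeed (v s)) d1 d2
  refine ⟨goal1, ?_⟩
  have hcomp : nγ = fun t => ψ (v t) := funext hnψ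
  have hd : HasDerivAt nγ (deriv v s • deriv ψ (v s)) s := by
    rw [hcomp]
    exact HasDerivAt.scomp s ((hψ.differentiable (by simp) (v s)).hasDerivAt)
      ((hv.differentiable (by simp) s).hasDerivAt)
  rw [hd.deriv, show deriv ψ (v s) = -(deriv γ s) by rw [goal1, neg_neg],
    smul_neg, neg_smul]
end
end

section
/- Let F be a gauge on ℝ² with smooth strictly convex unit circle, and γ(s) a smooth curve with F(γ'(s)) = 1. Then the arc-length curvature and Minkowski curvature satisfy k_l(s) = F(n_γ(s))·k_m(s), where n_γ is the right normal vector field. -/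
noncomputable section

lemma det2_smul_right (x y : ℝ × ℝ) (r : ℝ) : det2 x (r • y) = r * det2 x y := by
  simp [det2, Prod.smul_fst, Prod.smul_snd]; ring

theorem arclength_curvature_eq (F : ℝ × ℝ → ℝ) (hF : IsGauge F)
    (hSC : StrictConvex ℝ {x : ℝ × ℝ | F x ≤ 1})
    (γ nγ φ : ℝ → ℝ × ℝ) (τhat km : ℝ → ℝ)
    (hγ : ContDiff ℝ (⊤ : ℕ∞) γ) (hn : ContDiff ℝ (⊤ : ℕ∞) nγ) (hφ : ContDiff ℝ (⊤ : ℕ∞) φ)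
    (hτ : ContDiff ℝ (⊤ : ℕ∞) τhat)
    (hunit : ∀ s, F (deriv γ s) = 1)
    (hna : ∀ s, assocGauge F (nγ s) = 1)
    (hB : ∀ s, det2 (deriv γ s) (nγ s) = F (deriv γ s) * assocGauge F (nγ s))
    (hkm : ∀ s, deriv (deriv γ) s = km s • nγ s)
    (hφcirc : ∀ t, F (φ t) = 1)
    (hφspeed : ∀ t, F (deriv φ t) = 1)
    (hφccw : ∀ t, det2 (φ t) (deriv φ t) > 0)
    (hτhat : ∀ s, deriv γ s = φ (τhat s)) :
    ∀ s : ℝ, deriv τhat s = F (nγ s) * km s := by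
  intro s
  -- chain rule: γ'' = τ' • φ'(τ)
  have hchain : deriv (deriv γ) s = deriv τhat s • deriv φ (τhat s) := by
    have hdγ : deriv γ = fun s => φ (τhat s) := funext hτhat
    rw [hdγ]
    have h1 : HasDerivAt τhat (deriv τhat s) s :=
      ((hτ.differentiable (by simp)) s).hasDerivAt
    have h2 : HasDerivAt φ (deriv φ (τhat s)) (τhat s) :=
      ((hφ.differentiable (by simp)) (τhat s)).hasDerivAt
    exact (h2.scomp s h1).deriv
  set a := km s with ha_def
  set c := deriv τhat s with hc_def
  set n := nγ s with hn_def
  set v := deriv φ (τhat s) with hv_def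
  set u := deriv γ s with hu_def
  have hun : det2 u n = 1 := by rw [hB s, hunit s, hna s]; ring
  have huv : det2 u v > 0 := by
    have := hφccw (τhat s); rwa [← hτhat s] at this
  have hav : a • n = c • v := by rw [← hkm s, hchain]
  have hdet : a = c * det2 u v := by
    have h := congrArg (det2 u) hav
    rwa [det2_smul_right, det2_smul_right, hun, mul_one] at h
  rcases eq_or_ne c 0 with hc | hc
  · rw [hc, zero_mul] at hdet
    rw [hc, hdet, mul_zero]
  · have ha : a ≠ 0 := by rw [hdet]; exact mul_ne_zero hc (ne_of_gt huv)
    have hn' : n = (a⁻¹ * c) • v := by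
      calc n = a⁻¹ • (a • n) := by rw [smul_smul, inv_mul_cancel₀ ha, one_smul]
        _ = a⁻¹ • (c • v) := by rw [hav]
        _ = (a⁻¹ * c) • v := by rw [smul_smul]
    have hpos : 0 < a⁻¹ * c := by
      have hinv : a⁻¹ * c = (det2 u v)⁻¹ := by
        field_simp [hdet]
        exact hdet.symm
      rw [hinv]; exact inv_pos.mpr huv
    have hFn : F n = a⁻¹ * c := by
      rw [hn', hF.2.2.1 _ _ hpos, hφspeed (τhat s), mul_one]
    rw [hFn, mul_comm (a⁻¹ * c) a, ← mul_assoc, mul_inv_cancel₀ ha, one_mul]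
end
end

section
/- Let F be a gauge on ℝ² with smooth strictly convex unit circle, γ(s) a smooth curve with F(γ'(s)) = 1, and suppose (c−s)·k_l(s) > 0 on an interval, where k_l is the arc-length curvature. Define the involute I(s) = γ(s) + (c−s)γ'(s). Then the evolute of I equals γ; that is, writing s* for the F-arc-length of I and k*_c for the circular curvature of I, one has k*_c(s) = 1/(c−s) and I(s) − (1/k*_c(s))·φ(t̂(s)) = γ(s). -/
noncomputable section

namespace EvoluteAux

lemma lin_rep (f : (ℝ × ℝ) →L[ℝ] ℝ) (x : ℝ × ℝ) :
    f x = x.1 * f (1, 0) + x.2 * f (0, 1) := by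
  have h : x = x.1 • ((1:ℝ), (0:ℝ)) + x.2 • ((0:ℝ), (1:ℝ)) := by simp [Prod.ext_iff]
  calc f x = f (x.1 • ((1:ℝ), (0:ℝ)) + x.2 • ((0:ℝ), (1:ℝ))) := congrArg f h
    _ = x.1 * f (1, 0) + x.2 * f (0, 1) := by
        rw [map_add, map_smul, map_smul, smul_eq_mul, smul_eq_mul]

lemma perp_rep {v : ℝ × ℝ} (hv : v ≠ 0) {a₁ a₂ : ℝ}
    (h : v.1 * a₁ + v.2 * a₂ = 0) :
    ∃ μ : ℝ, a₁ = μ * v.2 ∧ a₂ = -(μ * v.1) := by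
  have hv' : v.1 ≠ 0 ∨ v.2 ≠ 0 := by
    by_contra hc
    push_neg at hc
    exact hv (Prod.ext hc.1 hc.2)
  rcases hv' with h1 | h2
  · refine ⟨-a₂ / v.1, ?_, by field_simp⟩
    field_simp
    nlinarith [h]
  · refine ⟨a₁ / v.2, by field_simp, ?_⟩
    field_simp
    nlinarith [h]

lemma support_at (F : ℝ × ℝ → ℝ) (hF : IsGauge F)
    (hSC : StrictConvex ℝ {x : ℝ × ℝ | F x ≤ 1})
    (φ : ℝ → ℝ × ℝ) (hφ : ContDiff ℝ (⊤ : ℕ∞) φ)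
    (hφcirc : ∀ t, F (φ t) = 1) (t : ℝ) :
    ∃ f : (ℝ × ℝ) →L[ℝ] ℝ,
      (∀ x, F x ≤ 1 → f x ≤ f (φ t)) ∧ f (deriv φ t) = 0 ∧ 0 < f (φ t) := by
  obtain ⟨hF0, hFz, hFh, hFs⟩ := hF
  have hpos : ∀ x : ℝ × ℝ, x ≠ 0 → 0 < F x := by
    intro x hx
    rcases lt_or_eq_of_le (hF0 x) with h | h
    · exact h
    · exact absurd ((hFz x).1 h.symm) hx
  set K : Set (ℝ × ℝ) := {x : ℝ × ℝ | F x ≤ 1} with hKdef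
  have hKconv : Convex ℝ K := hSC.convex
  set p : ℝ × ℝ := φ t with hpdef
  have hp1 : F p = 1 := hφcirc t
  have hp0 : p ≠ 0 := by
    intro h
    rw [h, (hFz 0).2 rfl] at hp1
    norm_num at hp1
  have hpK : p ∈ K := le_of_eq hp1
  have hpn : 0 < ‖p‖ := norm_pos_iff.2 hp0
  -- p is not in the interior of K
  have hpnint : p ∉ interior K := by
    intro h
    rw [mem_interior_iff_mem_nhds] at h
    obtain ⟨ε, hε, hball⟩ := Metric.mem_nhds_iff.1 h
    set r : ℝ := 1 + ε / (2 * ‖p‖) with hrdef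
    have hr1 : 1 < r := by
      rw [hrdef]
      have : 0 < ε / (2 * ‖p‖) := by positivity
      linarith
    have hmem : r • p ∈ K := by
      apply hball
      rw [Metric.mem_ball, dist_eq_norm]
      have h1 : r • p - p = (r - 1) • p := by
        rw [sub_smul, one_smul]
      rw [h1, norm_smul, Real.norm_eq_abs, abs_of_pos (by linarith : (0:ℝ) < r - 1)]
      rw [hrdef]
      have h2 : (1 + ε / (2 * ‖p‖) - 1) * ‖p‖ = ε / 2 := by
        field_simp
        ring
      rw [h2]
      linarith
    have h3 : F (r • p) = r := by rw [hFh r p (by linarith), hp1, mul_one]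
    have h4 : r ≤ 1 := by rw [← h3]; exact hmem
    linarith
  -- the interior of K is nonempty
  have hnp2 : 0 < F (-p) := hpos _ (neg_ne_zero.2 hp0)
  set y : ℝ × ℝ := (F (-p))⁻¹ • (-p) with hydef
  have hy1 : F y = 1 := by
    rw [hydef, hFh _ _ (by positivity)]
    field_simp
  have hyK : y ∈ K := le_of_eq hy1
  have hy' : y = (-(F (-p))⁻¹) • p := by rw [hydef, neg_smul, smul_neg]
  have hpy : p ≠ y := by
    intro h
    have h2 : p = (-(F (-p))⁻¹) • p := h.trans hy'
    have h3 : (1 + (F (-p))⁻¹) • p = 0 := by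
      rw [add_smul, one_smul]
      nth_rewrite 1 [h2]
      rw [neg_smul]
      abel
    rcases smul_eq_zero.1 h3 with h4 | h4
    · have : (0:ℝ) < 1 + (F (-p))⁻¹ := by positivity
      linarith [this, h4.le]
    · exact hp0 h4
  have hz0int : (1/2 : ℝ) • p + (1/2 : ℝ) • y ∈ interior K :=
    hSC hpK hyK hpy (by norm_num) (by norm_num) (by norm_num)
  set z₀ : ℝ × ℝ := (1/2 : ℝ) • p + (1/2 : ℝ) • y with hz0def
  -- separating functional
  obtain ⟨f, hf⟩ := geometric_hahn_banach_open_point hKconv.interior isOpen_interior hpnint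
  -- f supports K at p
  have hfK : ∀ x ∈ K, f x ≤ f p := by
    intro x hx
    by_contra hlt
    push_neg at hlt
    have key : ∀ θ : ℝ, 0 < θ → θ ≤ 1 → f x - f p < θ * (f x - f z₀) := by
      intro θ h1 h2
      have hmem : θ • z₀ + (1 - θ) • x ∈ interior K :=
        hKconv.combo_interior_self_mem_interior hz0int hx h1 (by linarith) (by ring)
      have := hf _ hmem
      rw [map_add, map_smul, map_smul, smul_eq_mul, smul_eq_mul] at this
      nlinarith
    have h1 := key 1 one_pos le_rfl
    have hd : 0 < f x - f z₀ := by nlinarith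
    have h2 := key ((f x - f p) / (2 * (f x - f z₀)))
      (div_pos (by linarith) (by linarith))
      (by rw [div_le_one (by linarith : (0:ℝ) < 2 * (f x - f z₀))]; nlinarith)
    have h3 : (f x - f p) / (2 * (f x - f z₀)) * (f x - f z₀) = (f x - f p) / 2 := by
      field_simp
    rw [h3] at h2
    nlinarith
  -- f vanishes on the tangent vector
  have hfv : f (deriv φ t) = 0 := by
    have hmax : IsLocalMax (fun u => f (φ u)) t :=
      Filter.Eventually.of_forall fun u => hfK (φ u) (le_of_eq (hφcirc u))
    have hd : HasDerivAt (fun u => f (φ u)) (f (deriv φ t)) t :=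
      f.hasFDerivAt.comp_hasDerivAt t ((hφ.differentiable (by simp) t).hasDerivAt)
    exact hmax.hasDerivAt_eq_zero hd
  -- f is positive at p
  have hfp : 0 < f p := by
    have hz0lt : f z₀ < f p := hf z₀ hz0int
    set w : ℝ × ℝ := p - z₀ with hwdef
    have hfw : 0 < f w := by rw [hwdef, map_sub]; linarith
    have hw0 : w ≠ 0 := by
      intro h
      rw [h, map_zero] at hfw
      exact lt_irrefl 0 hfw
    have hFw : 0 < F w := hpos w hw0
    have hx1 : F ((F w)⁻¹ • w) = 1 := by
      rw [hFh _ _ (by positivity)]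
      field_simp
    have hle := hfK _ (le_of_eq hx1)
    rw [map_smul, smul_eq_mul] at hle
    have hgt : 0 < (F w)⁻¹ * f w := by positivity
    linarith
  exact ⟨f, hfK, hfv, hfp⟩

/-- The oriented unit tangent determines the point on a strictly convex circle. -/
lemma tangent_determines_point (F : ℝ × ℝ → ℝ) (hF : IsGauge F)
    (hSC : StrictConvex ℝ {x : ℝ × ℝ | F x ≤ 1})
    (φ : ℝ → ℝ × ℝ) (hφ : ContDiff ℝ (⊤ : ℕ∞) φ)
    (hφcirc : ∀ t, F (φ t) = 1)
    (hφspeed : ∀ t, F (deriv φ t) = 1)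
    (hφccw : ∀ t, det2 (φ t) (deriv φ t) > 0)
    (t₁ t₂ : ℝ) (hv : deriv φ t₁ = deriv φ t₂) : φ t₁ = φ t₂ := by
  obtain ⟨f, hfK, hfv, hfp⟩ := support_at F hF hSC φ hφ hφcirc t₁
  obtain ⟨g, hgK, hgv, hgp⟩ := support_at F hF hSC φ hφ hφcirc t₂
  obtain ⟨hF0, hFz, hFh, hFs⟩ := hF
  have hv0 : deriv φ t₁ ≠ 0 := by
    intro h
    have h1 := hφspeed t₁
    rw [h, (hFz 0).2 rfl] at h1
    norm_num at h1
  have hdetp : 0 < det2 (φ t₁) (deriv φ t₁) := hφccw t₁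
  have hdetq : 0 < det2 (φ t₂) (deriv φ t₁) := by
    rw [hv]; exact hφccw t₂
  have hgv' : g (deriv φ t₁) = 0 := by rw [hv]; exact hgv
  -- representations
  have hfperp : (deriv φ t₁).1 * f (1,0) + (deriv φ t₁).2 * f (0,1) = 0 := by
    rw [← lin_rep]; exact hfv
  have hgperp : (deriv φ t₁).1 * g (1,0) + (deriv φ t₁).2 * g (0,1) = 0 := by
    rw [← lin_rep]; exact hgv'
  obtain ⟨μ, hμ1, hμ2⟩ := perp_rep hv0 hfperp
  obtain ⟨ν, hν1, hν2⟩ := perp_rep hv0 hgperp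
  have hfrep : ∀ x : ℝ × ℝ, f x = μ * det2 x (deriv φ t₁) := by
    intro x
    rw [lin_rep, hμ1, hμ2, det2]
    ring
  have hgrep : ∀ x : ℝ × ℝ, g x = ν * det2 x (deriv φ t₁) := by
    intro x
    rw [lin_rep, hν1, hν2, det2]
    ring
  have hμpos : 0 < μ := by
    have h := hfp
    rw [hfrep] at h
    rcases mul_pos_iff.1 h with ⟨h1, _⟩ | ⟨_, h2⟩
    · exact h1
    · linarith
  have hνpos : 0 < ν := by
    have h := hgp
    rw [hgrep] at h
    rcases mul_pos_iff.1 h with ⟨h1, _⟩ | ⟨_, h2⟩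
    · exact h1
    · linarith
  -- the two support values agree
  have h1 : g (φ t₁) ≤ g (φ t₂) := hgK _ (le_of_eq (hφcirc t₁))
  have h2 : f (φ t₂) ≤ f (φ t₁) := hfK _ (le_of_eq (hφcirc t₂))
  rw [hfrep, hfrep] at h2
  rw [hgrep, hgrep] at h1
  have hd1 : det2 (φ t₂) (deriv φ t₁) ≤ det2 (φ t₁) (deriv φ t₁) :=
    le_of_mul_le_mul_left h2 hμpos
  have hd2 : det2 (φ t₁) (deriv φ t₁) ≤ det2 (φ t₂) (deriv φ t₁) :=
    le_of_mul_le_mul_left h1 hνpos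
  have hfq : f (φ t₂) = f (φ t₁) := by
    rw [hfrep, hfrep]
    have : det2 (φ t₂) (deriv φ t₁) = det2 (φ t₁) (deriv φ t₁) := le_antisymm hd1 hd2
    rw [this]
  -- strict convexity: the midpoint would be interior, contradiction
  by_contra hne
  have hpK : φ t₁ ∈ {x : ℝ × ℝ | F x ≤ 1} := le_of_eq (hφcirc t₁)
  have hqK : φ t₂ ∈ {x : ℝ × ℝ | F x ≤ 1} := le_of_eq (hφcirc t₂)
  have hzint : (1/2 : ℝ) • φ t₁ + (1/2 : ℝ) • φ t₂ ∈ interior {x : ℝ × ℝ | F x ≤ 1} :=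
    hSC hpK hqK hne (by norm_num) (by norm_num) (by norm_num)
  have hp0 : φ t₁ ≠ 0 := by
    intro h
    have h1 := hφcirc t₁
    rw [h, (hFz 0).2 rfl] at h1
    norm_num at h1
  have hpn : 0 < ‖φ t₁‖ := norm_pos_iff.2 hp0
  rw [mem_interior_iff_mem_nhds] at hzint
  obtain ⟨ε, hε, hball⟩ := Metric.mem_nhds_iff.1 hzint
  set z : ℝ × ℝ := (1/2 : ℝ) • φ t₁ + (1/2 : ℝ) • φ t₂ with hzdef
  have hxK : z + (ε / (2 * ‖φ t₁‖)) • φ t₁ ∈ {x : ℝ × ℝ | F x ≤ 1} := by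
    apply hball
    rw [Metric.mem_ball, dist_eq_norm]
    have h5 : z + (ε / (2 * ‖φ t₁‖)) • φ t₁ - z = (ε / (2 * ‖φ t₁‖)) • φ t₁ := by abel
    rw [h5, norm_smul, Real.norm_eq_abs, abs_of_pos (by positivity)]
    have h6 : ε / (2 * ‖φ t₁‖) * ‖φ t₁‖ = ε / 2 := by
      field_simp
    rw [h6]
    linarith
  have hle := hfK _ hxK
  rw [map_add, map_smul, smul_eq_mul] at hle
  have hfz : f z = f (φ t₁) := by
    rw [hzdef, map_add, map_smul, map_smul, smul_eq_mul, smul_eq_mul, hfq]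
    ring
  have hgt : 0 < ε / (2 * ‖φ t₁‖) * f (φ t₁) := by positivity
  rw [hfz] at hle
  linarith

end EvoluteAux

theorem evolute_of_involute (F : ℝ × ℝ → ℝ) (hF : IsGauge F)
    (hsm : ContDiffOn ℝ (⊤ : ℕ∞) F {x : ℝ × ℝ | x ≠ 0})
    (hSC : StrictConvex ℝ {x : ℝ × ℝ | F x ≤ 1})
    (φ γ : ℝ → ℝ × ℝ) (τhat sstar tI : ℝ → ℝ) (c a b : ℝ)
    (hφ : ContDiff ℝ (⊤ : ℕ∞) φ) (hγ : ContDiff ℝ (⊤ : ℕ∞) γ) (hτ : ContDiff ℝ (⊤ : ℕ∞) τhat)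
    (hsstarsm : ContDiff ℝ (⊤ : ℕ∞) sstar) (htIsm : ContDiff ℝ (⊤ : ℕ∞) tI)
    -- φ is the counterclockwise arc-length parametrization of the unit circle S
    (hφcirc : ∀ t, F (φ t) = 1)
    (hφspeed : ∀ t, F (deriv φ t) = 1)
    (hφccw : ∀ t, det2 (φ t) (deriv φ t) > 0)
    -- γ is unit speed, with tangent indicatrix τhat and arc-length curvature deriv τhat
    (hunit : ∀ s, F (deriv γ s) = 1)
    (hτhat : ∀ s, deriv γ s = φ (τhat s))
    (hkl : ∀ s ∈ Set.Ioo a b, (c - s) * deriv τhat s > 0)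
    -- sstar is the F-arc-length of the involute I(s) = γ(s) + (c - s) • γ'(s)
    (hsstar : ∀ s ∈ Set.Ioo a b,
      deriv sstar s = F (deriv (fun u => γ u + (c - u) • deriv γ u) s))
    -- tI gives the unit tangent φ'(tI(s*)) of the involute, defining its circular curvature
    (htI : ∀ s ∈ Set.Ioo a b,
      deriv (fun u => γ u + (c - u) • deriv γ u) s =
        deriv sstar s • deriv φ (tI (sstar s))) :
    ∀ s ∈ Set.Ioo a b,
      deriv tI (sstar s) = 1 / (c - s) ∧
      (γ s + (c - s) • deriv γ s) - (1 / deriv tI (sstar s)) • φ (τhat s) = γ s := by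
  obtain ⟨hF0, hFz, hFh, hFs⟩ := hF
  have hdγ : deriv γ = fun u => φ (τhat u) := funext hτhat
  -- derivative of the involute
  have hIder : ∀ u : ℝ, HasDerivAt (fun w => γ w + (c - w) • deriv γ w)
      (((c - u) * deriv τhat u) • deriv φ (τhat u)) u := by
    intro u
    have h1 : HasDerivAt γ (deriv γ u) u := (hγ.differentiable (by simp) u).hasDerivAt
    have hφτ : HasDerivAt (fun w => φ (τhat w)) (deriv τhat u • deriv φ (τhat u)) u :=
      HasDerivAt.scomp u ((hφ.differentiable (by simp) _).hasDerivAt)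
        ((hτ.differentiable (by simp) u).hasDerivAt)
    have hc : HasDerivAt (fun w : ℝ => c - w) (-1) u := by
      simpa using (hasDerivAt_id' u).const_sub c
    have h2 : HasDerivAt (fun w => (c - w) • deriv γ w)
        ((c - u) • deriv τhat u • deriv φ (τhat u) + (-1 : ℝ) • φ (τhat u)) u := by
      rw [hdγ]
      exact hc.smul hφτ
    have h3 := h1.add h2
    have h4 : deriv γ u + ((c - u) • deriv τhat u • deriv φ (τhat u) +
        (-1 : ℝ) • φ (τhat u)) =
        ((c - u) * deriv τhat u) • deriv φ (τhat u) := by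
      rw [hτhat u, smul_smul]
      module
    rwa [h4] at h3
  -- the F-arc-length derivative
  have hsderiv : ∀ s ∈ Set.Ioo a b, deriv sstar s = (c - s) * deriv τhat s := by
    intro s hs
    rw [hsstar s hs, (hIder s).deriv, hFh _ _ (hkl s hs), hφspeed, mul_one]
  -- the tangents agree
  have htang : ∀ s ∈ Set.Ioo a b, deriv φ (tI (sstar s)) = deriv φ (τhat s) := by
    intro s hs
    have h1 := htI s hs
    rw [(hIder s).deriv, hsderiv s hs] at h1
    have hk : (c - s) * deriv τhat s ≠ 0 := ne_of_gt (hkl s hs)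
    exact (smul_right_injective (ℝ × ℝ) hk h1.symm)
  -- hence the points agree
  have hpts : ∀ s ∈ Set.Ioo a b, φ (tI (sstar s)) = φ (τhat s) := by
    intro s hs
    exact EvoluteAux.tangent_determines_point F ⟨hF0, hFz, hFh, hFs⟩ hSC φ hφ
      hφcirc hφspeed hφccw _ _ (htang s hs)
  intro s hs
  -- differentiate the identity φ (tI (sstar u)) = φ (τhat u) on the interval
  have hev : (fun u => φ (tI (sstar u))) =ᶠ[nhds s] (fun u => φ (τhat u)) :=
    Filter.eventuallyEq_of_mem (Ioo_mem_nhds hs.1 hs.2) (fun u hu => hpts u hu)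
  have hd1 : HasDerivAt (fun u => φ (tI (sstar u)))
      ((deriv tI (sstar s) * deriv sstar s) • deriv φ (tI (sstar s))) s := by
    have hin : HasDerivAt (fun u => tI (sstar u)) (deriv tI (sstar s) * deriv sstar s) s :=
      HasDerivAt.comp s ((htIsm.differentiable (by simp) _).hasDerivAt)
        ((hsstarsm.differentiable (by simp) s).hasDerivAt)
    exact HasDerivAt.scomp s ((hφ.differentiable (by simp) _).hasDerivAt) hin
  have hd2 : HasDerivAt (fun u => φ (τhat u)) (deriv τhat s • deriv φ (τhat s)) s :=
    HasDerivAt.scomp s ((hφ.differentiable (by simp) _).hasDerivAt)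
      ((hτ.differentiable (by simp) s).hasDerivAt)
  have hdeq : (deriv tI (sstar s) * deriv sstar s) • deriv φ (tI (sstar s)) =
      deriv τhat s • deriv φ (τhat s) := by
    have := hev.deriv_eq
    rw [hd1.deriv, hd2.deriv] at this
    exact this
  rw [htang s hs, hsderiv s hs] at hdeq
  have hw0 : deriv φ (τhat s) ≠ 0 := by
    intro h
    have h1 := hφspeed (τhat s)
    rw [h, (hFz 0).2 rfl] at h1
    norm_num at h1
  have hscal : deriv tI (sstar s) * ((c - s) * deriv τhat s) = deriv τhat s :=
    smul_left_injective ℝ hw0 hdeq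
  have hks := hkl s hs
  have hcs : c - s ≠ 0 := by
    intro h
    rw [h, zero_mul] at hks
    exact lt_irrefl 0 hks
  have hτs : deriv τhat s ≠ 0 := by
    intro h
    rw [h, mul_zero] at hks
    exact lt_irrefl 0 hks
  have hmain : deriv tI (sstar s) = 1 / (c - s) := by
    have h1 : (deriv tI (sstar s) * (c - s)) * deriv τhat s = 1 * deriv τhat s := by
      linear_combination hscal
    have h2 : deriv tI (sstar s) * (c - s) = 1 := mul_right_cancel₀ hτs h1
    rw [eq_div_iff hcs]
    linarith [h2]
  refine ⟨hmain, ?_⟩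
  rw [hmain, one_div_one_div, hτhat s]
  abel

end
end

section
/- Let F be a gauge on ℝ² with smooth strictly convex unit circle, γ(s) a smooth unit-speed curve (F(γ'(s)) = 1) with circular curvature k_c satisfying k_c'(s) > 0 on an interval. Define the evolute E(s) = γ(s) − (1/k_c(s))φ(t(s)), where φ(t(s)) is the left normal vector field. Then E'(s) = (k_c'(s)/k_c(s)²)·φ(t(s)), the F-arc-length of E is s* = c − 1/k_c(s) for a constant c, and the involute of E with constant c recovers γ: E(s) + (c − s*)·(dE/ds*) = γ(s). -/
noncomputable section

/-- Derivative of the evolute at a point where the curvature does not vanish. -/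
lemma evolDeriv (φ γ : ℝ → ℝ × ℝ) (t : ℝ → ℝ)
    (hφ : ContDiff ℝ (⊤ : ℕ∞) φ) (hγ : ContDiff ℝ (⊤ : ℕ∞) γ) (ht : ContDiff ℝ (⊤ : ℕ∞) t)
    (htangent : ∀ s, deriv γ s = deriv φ (t s))
    (s : ℝ) (hk : deriv t s ≠ 0) :
    HasDerivAt (fun u => γ u - (1 / deriv t u) • φ (t u))
      ((deriv (deriv t) s / (deriv t s) ^ 2) • φ (t s)) s := by
  have hksm : ContDiff ℝ (↑(⊤:ℕ∞)) (deriv t) :=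
    (contDiff_infty_iff_deriv.mp (ht.of_le (by simp))).2
  have h1 : HasDerivAt t (deriv t s) s := (ht.differentiable (by simp) s).hasDerivAt
  have h2 : HasDerivAt (deriv t) (deriv (deriv t) s) s :=
    (hksm.differentiable (by simp) s).hasDerivAt
  have h3 : HasDerivAt φ (deriv φ (t s)) (t s) := (hφ.differentiable (by simp) (t s)).hasDerivAt
  have h4 : HasDerivAt (fun u => φ (t u)) (deriv t s • deriv φ (t s)) s := h3.scomp s h1
  have h5 : HasDerivAt (fun u => (deriv t u)⁻¹) (-(deriv (deriv t) s) / (deriv t s) ^ 2) s :=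
    h2.inv hk
  have h6 := h5.smul h4
  have h7 : HasDerivAt γ (deriv γ s) s := (hγ.differentiable (by simp) s).hasDerivAt
  have h8 := h7.sub h6
  simp only [one_div]
  refine h8.congr_deriv ?_
  rw [htangent, smul_smul, inv_mul_cancel₀ hk, one_smul]
  rw [neg_div, neg_smul]
  abel

theorem involute_of_evolute (F : ℝ × ℝ → ℝ) (hF : IsGauge F)
    (hsm : ContDiffOn ℝ (⊤ : ℕ∞) F {x : ℝ × ℝ | x ≠ 0})
    (hSC : StrictConvex ℝ {x : ℝ × ℝ | F x ≤ 1})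
    (φ γ : ℝ → ℝ × ℝ) (t sstar : ℝ → ℝ) (a b : ℝ)
    (hφ : ContDiff ℝ (⊤ : ℕ∞) φ) (hγ : ContDiff ℝ (⊤ : ℕ∞) γ) (ht : ContDiff ℝ (⊤ : ℕ∞) t)
    (hsstarsm : ContDiff ℝ (⊤ : ℕ∞) sstar)
    -- φ is the counterclockwise arc-length parametrization of the unit circle S
    (hφcirc : ∀ u, F (φ u) = 1)
    (hφspeed : ∀ u, F (deriv φ u) = 1)
    (hφccw : ∀ u, det2 (φ u) (deriv φ u) > 0)
    -- γ is unit speed; γ'(s) = φ'(t(s)) defines the circular curvature k_c = deriv t,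
    -- and φ(t(s)) is the left normal vector field
    (hunit : ∀ s, F (deriv γ s) = 1)
    (htangent : ∀ s, deriv γ s = deriv φ (t s))
    (hleft : ∀ s, det2 (deriv γ s) (φ (t s)) < 0)
    (hkc' : ∀ s ∈ Set.Ioo a b, deriv (deriv t) s > 0)
    -- sstar is the F-arc-length of the evolute E(s) = γ(s) − (1/k_c(s)) • φ(t(s))
    (hsstar : ∀ s ∈ Set.Ioo a b,
      deriv sstar s = F (deriv (fun u => γ u - (1 / deriv t u) • φ (t u)) s)) :
    (∀ s ∈ Set.Ioo a b,
      deriv (fun u => γ u - (1 / deriv t u) • φ (t u)) s =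
        (deriv (deriv t) s / (deriv t s) ^ 2) • φ (t s)) ∧
    ∃ c : ℝ,
      (∀ s ∈ Set.Ioo a b, sstar s = c - 1 / deriv t s) ∧
      ∀ s ∈ Set.Ioo a b,
        (γ s - (1 / deriv t s) • φ (t s)) + (c - sstar s) • φ (t s) = γ s := by
  have hksm : ContDiff ℝ (↑(⊤:ℕ∞)) (deriv t) :=
    (contDiff_infty_iff_deriv.mp (ht.of_le (by simp))).2
  have hkcont : Continuous (deriv t) := hksm.continuous
  have hk'cont : Continuous (deriv (deriv t)) := hksm.continuous_deriv (by simp)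
  have hgcont : Continuous (deriv sstar) := hsstarsm.continuous_deriv (by simp)
  -- the key formula for deriv sstar where curvature doesn't vanish
  have key : ∀ s ∈ Set.Ioo a b, deriv t s ≠ 0 →
      deriv sstar s = deriv (deriv t) s / (deriv t s) ^ 2 := by
    intro s hs hk
    have hpos : 0 < deriv (deriv t) s / (deriv t s) ^ 2 :=
      div_pos (hkc' s hs) (pow_two_pos_of_ne_zero hk)
    rw [hsstar s hs, (evolDeriv φ γ t hφ hγ ht htangent s hk).deriv,
      hF.2.2.1 _ _ hpos, hφcirc, mul_one]
  -- curvature does not vanish on the interval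
  have hne : ∀ s ∈ Set.Ioo a b, deriv t s ≠ 0 := by
    intro s₀ hs₀ hk0
    have hmono : StrictMonoOn (deriv t) (Set.Ioo a b) := by
      apply strictMonoOn_of_deriv_pos (convex_Ioo a b) hkcont.continuousOn
      intro x hx
      rw [interior_Ioo] at hx
      exact hkc' x hx
    have hkpos : ∀ s ∈ Set.Ioo s₀ b, 0 < deriv t s := by
      intro s hs
      have hs' : s ∈ Set.Ioo a b := ⟨lt_trans hs₀.1 hs.1, hs.2⟩
      have := hmono hs₀ hs' hs.1
      rwa [hk0] at this
    -- on (s₀, b), deriv sstar equals k'/k²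
    have hmem : Set.Ioo s₀ b ∈ nhdsWithin s₀ (Set.Ioi s₀) :=
      Ioo_mem_nhdsGT_of_mem ⟨le_refl _, hs₀.2⟩
    have heq : ∀ᶠ s in nhdsWithin s₀ (Set.Ioi s₀),
        deriv sstar s = deriv (deriv t) s / (deriv t s) ^ 2 := by
      filter_upwards [hmem] with s hs
      exact key s ⟨lt_trans hs₀.1 hs.1, hs.2⟩ (ne_of_gt (hkpos s hs))
    -- k'/k² → ∞
    have htop : Filter.Tendsto (fun s => deriv (deriv t) s / (deriv t s) ^ 2)
        (nhdsWithin s₀ (Set.Ioi s₀)) Filter.atTop := by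
      have hnum : Filter.Tendsto (fun s => deriv (deriv t) s)
          (nhdsWithin s₀ (Set.Ioi s₀)) (nhds (deriv (deriv t) s₀)) :=
        (hk'cont.tendsto s₀).mono_left nhdsWithin_le_nhds
      have hden0 : Filter.Tendsto (fun s => (deriv t s) ^ 2)
          (nhdsWithin s₀ (Set.Ioi s₀)) (nhds 0) := by
        have := ((hkcont.tendsto s₀).mono_left
          (nhdsWithin_le_nhds (s := Set.Ioi s₀))).pow 2
        rwa [hk0, zero_pow (by norm_num)] at this
      have hden : Filter.Tendsto (fun s => (deriv t s) ^ 2)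
          (nhdsWithin s₀ (Set.Ioi s₀)) (nhdsWithin 0 (Set.Ioi 0)) := by
        apply tendsto_nhdsWithin_of_tendsto_nhds_of_eventually_within _ hden0
        filter_upwards [hmem] with s hs
        exact pow_pos (hkpos s hs) 2
      have hinv : Filter.Tendsto (fun s => ((deriv t s) ^ 2)⁻¹)
          (nhdsWithin s₀ (Set.Ioi s₀)) Filter.atTop := hden.inv_tendsto_nhdsGT_zero
      have := Filter.Tendsto.pos_mul_atTop (hkc' s₀ hs₀) hnum hinv
      simpa [div_eq_mul_inv] using this
    have hgs : Filter.Tendsto (deriv sstar) (nhdsWithin s₀ (Set.Ioi s₀))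
        Filter.atTop := htop.congr' (heq.mono fun s h => h.symm)
    have hgn : Filter.Tendsto (deriv sstar) (nhdsWithin s₀ (Set.Ioi s₀))
        (nhds (deriv sstar s₀)) :=
      (hgcont.tendsto s₀).mono_left nhdsWithin_le_nhds
    exact not_tendsto_atTop_of_tendsto_nhds hgn hgs
  -- Part 1
  have part1 : ∀ s ∈ Set.Ioo a b,
      deriv (fun u => γ u - (1 / deriv t u) • φ (t u)) s =
        (deriv (deriv t) s / (deriv t s) ^ 2) • φ (t s) := fun s hs =>
    (evolDeriv φ γ t hφ hγ ht htangent s (hne s hs)).deriv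
  refine ⟨part1, ?_⟩
  by_cases hab : a < b
  · set s₁ := (a + b) / 2 with hs₁def
    have hs₁ : s₁ ∈ Set.Ioo a b := ⟨by linarith, by linarith⟩
    set f : ℝ → ℝ := fun s => sstar s + (deriv t s)⁻¹ with hfdef
    have hfderiv : ∀ s ∈ Set.Ioo a b, HasDerivAt f 0 s := by
      intro s hs
      have hk := hne s hs
      have h2 : HasDerivAt (deriv t) (deriv (deriv t) s) s :=
        (hksm.differentiable (by simp) s).hasDerivAt
      have h5 : HasDerivAt (fun u => (deriv t u)⁻¹)
          (-(deriv (deriv t) s) / (deriv t s) ^ 2) s := h2.inv hk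
      have hst : HasDerivAt sstar (deriv sstar s) s :=
        (hsstarsm.differentiable (by simp) s).hasDerivAt
      have := hst.add h5
      rw [key s hs hk] at this
      simp only [neg_div, add_neg_cancel] at this
      exact this
    have hconst : ∀ s ∈ Set.Ioo a b, f s = f s₁ := by
      have aux : ∀ x ∈ Set.Ioo a b, ∀ y ∈ Set.Ioo a b, x ≤ y → f y = f x := by
        intro x hx y hy hxy
        have hsub : Set.Icc x y ⊆ Set.Ioo a b := fun z hz =>
          ⟨lt_of_lt_of_le hx.1 hz.1, lt_of_le_of_lt hz.2 hy.2⟩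
        have hcont : ContinuousOn f (Set.Icc x y) := fun z hz =>
          ((hfderiv z (hsub hz)).continuousAt).continuousWithinAt
        have := constant_of_has_deriv_right_zero hcont
          (fun z hz => (hfderiv z (hsub ⟨hz.1, le_of_lt hz.2⟩)).hasDerivWithinAt)
        exact this y ⟨hxy, le_refl _⟩
      intro s hs
      rcases le_total s s₁ with h | h
      · exact (aux s hs s₁ hs₁ h).symm
      · exact aux s₁ hs₁ s hs h
    refine ⟨f s₁, ?_, ?_⟩
    · intro s hs
      have := hconst s hs
      rw [hfdef] at this
      simp only [one_div]
      linarith [this]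
    · intro s hs
      have h1 : sstar s = f s₁ - 1 / deriv t s := by
        have := hconst s hs
        rw [hfdef] at this
        simp only [one_div]
        linarith [this]
      rw [h1]
      have : f s₁ - (f s₁ - 1 / deriv t s) = 1 / deriv t s := by ring
      rw [this, sub_add_cancel]
  · refine ⟨0, ?_, ?_⟩ <;> intro s hs <;>
      · exfalso; exact hab (lt_trans hs.1 hs.2)
end
end
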